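/- arXiv:2207.04876 — 3 statements merged into one kernel-verified Lean document; each statement's English description precedes it below -/
import Mathlib

section
/- Let M ≥ 1 and let K ⊂ ℝ^M be compact. Let p : ℝ → ℝ be continuous with 0 ≤ p ≤ 1, and suppose there exist an integer l ≥ 1 and a Lebesgue-null set K₀ ⊂ ℝ such that p is l-times differentiable on ℝ \ K₀ and, for every r ∈ {1,…,l}, the r-th derivative p^{(r)} is Lebesgue integrable on ℝ \ K₀ with 0 < |∫_{ℝ\K₀} p^{(r)}(u) du| < ∞. Then the set of functions x ↦ Σ_{k=1}^{N} w_k·p(⟨a_k, x⟩ + b_k) — equivalently, the expected outputs x ↦ E[Σ_{k=1}^{N} w_k·s_k(x)] of a two-layer stochastic SNN whose hidden spikes s_k(x) are independent Bernoulli random variables with success probabilities p(⟨a_k, x⟩ + b_k) — with N ∈ ℕ, w_k, b_k ∈ ℝ and a_k ∈ ℝ^M, is dense in C(K, ℝ) with the supremum norm. -/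
open scoped RealInnerProductSpace


open scoped RealInnerProductSpace ContDiff Convolution
open MeasureTheory Filter Topology Function

noncomputable section SNNAuxAll


/-- `n`-th forward difference with step `s`. -/
private def snnFd (s : ℝ) : ℕ → (ℝ → ℝ) → ℝ → ℝ
  | 0, f => f
  | n+1, f => snnFd s n (fun v => f (v + s) - f v)

private lemma snnFd_sum (s : ℝ) : ∀ (n : ℕ) (f : ℝ → ℝ) (u : ℝ),
    snnFd s n f u
      = ∑ j ∈ Finset.range (n+1), ((-1:ℝ)^(n+j) * (n.choose j)) * f (u + j * s) := by
  intro n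
  induction n with
  | zero => intro f u; simp [snnFd]
  | succ n ih =>
    intro f u
    show snnFd s n (fun v => f (v + s) - f v) u = _
    rw [ih]
    have e1 : ∀ j : ℕ, (j:ℝ) * s + s = ((j:ℕ)+1 : ℕ) * s := by
      intro j; push_cast; ring
    -- LHS = ∑ c n j * f (u + (j+1) s) - ∑ c n j * f (u + j s)
    have hL : ∑ j ∈ Finset.range (n+1), ((-1:ℝ)^(n+j) * (n.choose j)) *
          ((fun v => f (v + s) - f v) (u + j * s))
        = (∑ j ∈ Finset.range (n+1), ((-1:ℝ)^(n+j) * (n.choose j)) * f (u + (j+1:ℕ) * s))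
          - ∑ j ∈ Finset.range (n+1), ((-1:ℝ)^(n+j) * (n.choose j)) * f (u + j * s) := by
      rw [← Finset.sum_sub_distrib]
      refine Finset.sum_congr rfl fun j hj => ?_
      have : u + (j:ℝ) * s + s = u + ((j:ℕ)+1 : ℕ) * s := by push_cast; ring
      simp only []
      rw [← this]; ring
    rw [hL]
    -- RHS reorganization
    rw [Finset.sum_range_succ' (fun j => ((-1:ℝ)^(n+1+j) * ((n+1).choose j)) * f (u + j * s)) (n+1)]
    have hsplit : ∀ j : ℕ, ((-1:ℝ)^(n+1+(j+1)) * ((n+1).choose (j+1)))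
        = (-1:ℝ)^(n+j) * (n.choose j) + (-1:ℝ)^(n+j) * (n.choose (j+1)) := by
      intro j
      have : (n+1).choose (j+1) = n.choose j + n.choose (j+1) := Nat.choose_succ_succ n j
      rw [this]
      have : (-1:ℝ)^(n+1+(j+1)) = (-1:ℝ)^(n+j) := by
        have : n+1+(j+1) = (n+j)+2 := by ring
        rw [this, pow_add]; norm_num
      rw [this]; push_cast; ring
    have hR1 : ∑ j ∈ Finset.range (n+1), ((-1:ℝ)^(n+1+(j+1)) * ((n+1).choose (j+1))) * f (u + (j+1:ℕ) * s)
        = (∑ j ∈ Finset.range (n+1), ((-1:ℝ)^(n+j) * (n.choose j)) * f (u + (j+1:ℕ) * s))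
          + ∑ j ∈ Finset.range (n+1), ((-1:ℝ)^(n+j) * (n.choose (j+1))) * f (u + (j+1:ℕ) * s) := by
      rw [← Finset.sum_add_distrib]
      refine Finset.sum_congr rfl fun j hj => ?_
      rw [hsplit j]; ring
    rw [hR1]
    -- remains: second sum + last term = - ∑ c n j f (u + j s)
    have hR2 : (∑ j ∈ Finset.range (n+1), ((-1:ℝ)^(n+j) * (n.choose (j+1))) * f (u + (j+1:ℕ) * s))
          + ((-1:ℝ)^(n+1+0) * ((n+1).choose 0)) * f (u + (0:ℕ) * s)
        = - ∑ j ∈ Finset.range (n+1), ((-1:ℝ)^(n+j) * (n.choose j)) * f (u + j * s) := by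
      rw [← Finset.sum_neg_distrib]
      rw [Finset.sum_range_succ' (fun j => -(((-1:ℝ)^(n+j) * (n.choose j)) * f (u + j * s))) n]
      have h2 : ∑ j ∈ Finset.range (n+1), ((-1:ℝ)^(n+j) * (n.choose (j+1))) * f (u + (j+1:ℕ) * s)
          = ∑ j ∈ Finset.range n, ((-1:ℝ)^(n+j) * (n.choose (j+1))) * f (u + (j+1:ℕ) * s) := by
        rw [Finset.sum_range_succ]
        simp [Nat.choose_succ_self]
      rw [h2]
      congr 1
      · refine Finset.sum_congr rfl fun j hj => ?_
        have : (-1:ℝ)^(n+(j+1)) = -(-1:ℝ)^(n+j) := by rw [← Nat.add_assoc, pow_succ]; ring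
        rw [this]; push_cast; ring
      · simp [pow_succ]
    linarith [hR2]



private lemma snn_natlt (n : ℕ) : (n : WithTop ℕ∞) < ∞ :=
  ENat.natCast_lt_of_coe_top_le_withTop le_rfl n

private lemma snn_iD_subX {f g : ℝ → ℝ} (hf : ContDiff ℝ ∞ f) (hg : ContDiff ℝ ∞ g)
    (n : ℕ) :
    iteratedDeriv n (fun x => f x - g x) = fun x => iteratedDeriv n f x - iteratedDeriv n g x := by
  induction n with
  | zero => simp
  | succ n ih =>
    rw [iteratedDeriv_succ, iteratedDeriv_succ, iteratedDeriv_succ, ih]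
    funext x
    exact deriv_sub ((hf.differentiable_iteratedDeriv n (snn_natlt n)).differentiableAt)
      ((hg.differentiable_iteratedDeriv n (snn_natlt n)).differentiableAt)

private lemma snn_abs_le_of_uIcc {t s : ℝ} (ht : t ∈ Set.uIcc (0:ℝ) s) : |t| ≤ |s| := by
  rcases le_total 0 s with h | h
  · rw [Set.uIcc_of_le h] at ht
    rw [abs_of_nonneg ht.1, abs_of_nonneg h]; exact ht.2
  · rw [Set.uIcc_of_ge h] at ht
    rw [abs_of_nonpos ht.2, abs_of_nonpos h]; linarith [ht.1]

private lemma snnFdBound (s : ℝ) :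
    ∀ (n : ℕ) (f : ℝ → ℝ), ContDiff ℝ ∞ f → ∀ (u ε : ℝ), 0 ≤ ε →
      (∀ v w : ℝ, |v - u| ≤ (n+1) * |s| → |w - u| ≤ (n+1) * |s| →
        |iteratedDeriv n f v - iteratedDeriv n f w| ≤ ε) →
      |snnFd s n f u - s^n * iteratedDeriv n f u| ≤ n * ε * |s|^n := by
  intro n
  induction n with
  | zero =>
    intro f hf u ε hε hosc
    simp [snnFd]
  | succ n ih =>
    intro f hf u ε hε hosc
    set A := iteratedDeriv n f with hA
    set A' := iteratedDeriv (n+1) f with hA'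
    have hA'c : Continuous A' := hf.continuous_iteratedDeriv (n+1) (le_of_lt (snn_natlt (n+1)))
    have hdA : Differentiable ℝ A := hf.differentiable_iteratedDeriv n (snn_natlt n)
    have hAderiv : ∀ v : ℝ, HasDerivAt A (A' v) v := by
      intro v
      have := (hdA v).hasDerivAt
      rwa [show deriv A v = A' v from (congrFun (iteratedDeriv_succ (n := n)) v).symm] at this
    have hshift : ContDiff ℝ ∞ (fun v : ℝ => f (v + s)) :=
      hf.comp (contDiff_id.add contDiff_const)
    have hΔ : ContDiff ℝ ∞ (fun v => f (v + s) - f v) := hshift.sub hf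
    -- FTC
    have key : ∀ v : ℝ, A (v + s) - A v = ∫ t in (0:ℝ)..s, A' (v + t) := by
      intro v
      have h1 : (∫ t in (0:ℝ)..s, A' (v + t)) = ∫ t in (v+0)..(v+s), A' t :=
        intervalIntegral.integral_comp_add_left A' v
      rw [h1, add_zero]
      rw [intervalIntegral.integral_eq_sub_of_hasDerivAt (fun t _ => hAderiv t)
        (hA'c.intervalIntegrable _ _)]
    -- iterated derivative of the difference
    have hDn : iteratedDeriv n (fun v => f (v + s) - f v) = fun v => A (v + s) - A v := by
      have h1 := snn_iD_subX hshift hf n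
      have h2 := iteratedDeriv_comp_add_const n f s
      funext v
      calc iteratedDeriv n (fun v => f (v + s) - f v) v
          = iteratedDeriv n (fun w => f (w + s)) v - A v := congrFun h1 v
        _ = A (v + s) - A v := by rw [congrFun h2 v]
    -- oscillation of the difference's n-th derivative
    have hosc' : ∀ v w : ℝ, |v - u| ≤ (n+1) * |s| → |w - u| ≤ (n+1) * |s| →
        |iteratedDeriv n (fun v => f (v + s) - f v) v
          - iteratedDeriv n (fun v => f (v + s) - f v) w| ≤ |s| * ε := by
      intro v w hv hw
      rw [hDn]
      have hint1 : IntervalIntegrable (fun t => A' (v + t)) volume 0 s :=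
        (hA'c.comp (continuous_const.add continuous_id)).intervalIntegrable _ _
      have hint2 : IntervalIntegrable (fun t => A' (w + t)) volume 0 s :=
        (hA'c.comp (continuous_const.add continuous_id)).intervalIntegrable _ _
      have hsub : (A (v + s) - A v) - (A (w + s) - A w)
          = ∫ t in (0:ℝ)..s, (A' (v + t) - A' (w + t)) := by
        rw [intervalIntegral.integral_sub hint1 hint2, ← key v, ← key w]
      rw [hsub]
      have hb : ∀ t ∈ Set.uIoc (0:ℝ) s, ‖A' (v + t) - A' (w + t)‖ ≤ ε := by
        intro t ht
        have htle : |t| ≤ |s| := snn_abs_le_of_uIcc (Set.uIoc_subset_uIcc ht)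
        have h1 : |(v + t) - u| ≤ ((n:ℝ)+1+1) * |s| := by
          have := abs_add_le (v - u) t
          have h2 : |v + t - u| ≤ |v - u| + |t| := by
            have : v + t - u = (v - u) + t := by ring
            rw [this]; exact abs_add_le _ _
          nlinarith [abs_nonneg s]
        have h2 : |(w + t) - u| ≤ ((n:ℝ)+1+1) * |s| := by
          have h2 : |w + t - u| ≤ |w - u| + |t| := by
            have : w + t - u = (w - u) + t := by ring
            rw [this]; exact abs_add_le _ _
          nlinarith [abs_nonneg s]
        have := hosc (v + t) (w + t) (by push_cast; linarith) (by push_cast; linarith)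
        simpa [Real.norm_eq_abs] using this
      have := intervalIntegral.norm_integral_le_of_norm_le_const hb
      simp only [Real.norm_eq_abs, sub_zero] at this
      calc |∫ t in (0:ℝ)..s, (A' (v + t) - A' (w + t))| ≤ ε * |s| := this
        _ = |s| * ε := by ring
    -- apply the inductive hypothesis
    have hIH := ih (fun v => f (v + s) - f v) hΔ u (|s| * ε)
      (mul_nonneg (abs_nonneg s) hε) hosc'
    rw [hDn] at hIH
    -- second piece
    have hpiece : |A (u + s) - A u - s * A' u| ≤ ε * |s| := by
      have h2 : A (u + s) - A u - s * A' u = ∫ t in (0:ℝ)..s, (A' (u + t) - A' u) := by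
        have hint1 : IntervalIntegrable (fun t => A' (u + t)) volume 0 s :=
          (hA'c.comp (continuous_const.add continuous_id)).intervalIntegrable _ _
        rw [intervalIntegral.integral_sub hint1 intervalIntegrable_const, ← key u,
          intervalIntegral.integral_const]
        simp only [sub_zero, smul_eq_mul]
      rw [h2]
      have hb : ∀ t ∈ Set.uIoc (0:ℝ) s, ‖A' (u + t) - A' u‖ ≤ ε := by
        intro t ht
        have htle : |t| ≤ |s| := snn_abs_le_of_uIcc (Set.uIoc_subset_uIcc ht)
        have h1 : |(u + t) - u| ≤ ((n:ℝ)+1+1) * |s| := by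
          have : u + t - u = t := by ring
          rw [this]; nlinarith [abs_nonneg s, abs_nonneg t]
        have h0 : |u - u| ≤ ((n:ℝ)+1+1) * |s| := by
          simp; positivity
        have := hosc (u + t) u (by push_cast; linarith) (by push_cast; linarith [h0])
        simpa [Real.norm_eq_abs] using this
      have := intervalIntegral.norm_integral_le_of_norm_le_const hb
      simpa [Real.norm_eq_abs] using this
    -- combine
    have hfd : snnFd s (n+1) f u = snnFd s n (fun v => f (v + s) - f v) u := rfl
    have habs : |s^n| = |s|^n := abs_pow s n
    calc |snnFd s (n+1) f u - s^(n+1) * A' u|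
        = |(snnFd s n (fun v => f (v + s) - f v) u - s^n * (A (u + s) - A u))
            + s^n * (A (u + s) - A u - s * A' u)| := by
          rw [hfd]; congr 1; ring
      _ ≤ |snnFd s n (fun v => f (v + s) - f v) u - s^n * (A (u + s) - A u)|
            + |s^n * (A (u + s) - A u - s * A' u)| := abs_add_le _ _
      _ ≤ n * (|s| * ε) * |s|^n + |s|^n * (ε * |s|) := by
          refine add_le_add ?_ ?_
          · simpa using hIH
          · rw [abs_mul, habs]
            exact mul_le_mul_of_nonneg_left hpiece (by positivity)
      _ = (n+1) * ε * |s|^(n+1) := by rw [pow_succ]; push_cast; ring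
      _ = ((n+1 : ℕ) : ℝ) * ε * |s|^(n+1) := by push_cast; ring




private lemma snn_natltB (n : ℕ) : (n : WithTop ℕ∞) < ∞ :=
  ENat.natCast_lt_of_coe_top_le_withTop le_rfl n

private lemma snn_iteratedDeriv_sub {f g : ℝ → ℝ} (hf : ContDiff ℝ ∞ f) (hg : ContDiff ℝ ∞ g)
    (n : ℕ) :
    iteratedDeriv n (fun x => f x - g x) = fun x => iteratedDeriv n f x - iteratedDeriv n g x := by
  induction n with
  | zero => simp
  | succ n ih =>
    rw [iteratedDeriv_succ, iteratedDeriv_succ, iteratedDeriv_succ, ih]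
    funext x
    exact deriv_sub ((hf.differentiable_iteratedDeriv n (snn_natltB n)).differentiableAt)
      ((hg.differentiable_iteratedDeriv n (snn_natltB n)).differentiableAt)

private lemma snn_poly_of_iteratedDeriv_zero :
    ∀ (n : ℕ) (f : ℝ → ℝ), ContDiff ℝ ∞ f → iteratedDeriv n f = 0 →
      ∃ P : Polynomial ℝ, ∀ x, f x = P.eval x := by
  intro n
  induction n with
  | zero =>
    intro f _ h
    exact ⟨0, fun x => by simpa using congrFun h x⟩
  | succ n ih =>
    intro f hf h
    have hdf : ContDiff ℝ ∞ (deriv f) := (contDiff_infty_iff_deriv.mp hf).2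
    have h' : iteratedDeriv n (deriv f) = 0 := by
      rw [← iteratedDeriv_succ']; exact h
    obtain ⟨Q, hQ⟩ := ih (deriv f) hdf h'
    set R : Polynomial ℝ := Q.sum fun i a => Polynomial.C (a / (i+1)) * Polynomial.X ^ (i+1)
      with hR
    have hdR : R.derivative = Q := by
      rw [hR, Polynomial.sum_def, map_sum]
      have : ∀ i ∈ Q.support,
          Polynomial.derivative (Polynomial.C (Q.coeff i / (i+1)) * Polynomial.X ^ (i+1))
            = Polynomial.C (Q.coeff i) * Polynomial.X ^ i := by
        intro i _
        rw [Polynomial.derivative_C_mul_X_pow]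
        have h1 : (Q.coeff i / ((i:ℝ)+1)) * (((i+1 : ℕ)):ℝ) = Q.coeff i := by
          push_cast; field_simp
        rw [Nat.add_sub_cancel, h1]
      rw [Finset.sum_congr rfl this]
      conv_rhs => rw [← Polynomial.sum_C_mul_X_pow_eq Q]
      rw [Polynomial.sum_def]
    have hder : ∀ x : ℝ, deriv (fun y => f y - R.eval y) x = 0 := by
      intro x
      rw [deriv_fun_sub (hf.differentiable (by simp [snn_natltB]) x) (Polynomial.differentiableAt R)]
      rw [Polynomial.deriv, hdR, ← hQ]
      ring
    have hdiff : Differentiable ℝ fun y => f y - R.eval y :=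
      (hf.differentiable (by simp [snn_natltB])).sub R.differentiable
    refine ⟨R + Polynomial.C (f 0 - R.eval 0), fun x => ?_⟩
    have := is_const_of_deriv_eq_zero hdiff hder x 0
    simp only [Polynomial.eval_add, Polynomial.eval_C]
    linarith

private lemma snn_exists_iteratedDeriv_ne_zero {f : ℝ → ℝ} (hf : ContDiff ℝ ∞ f)
    (hb : ∀ x, |f x| ≤ 1) {u₁ u₂ : ℝ} (hne : f u₁ ≠ f u₂) (n : ℕ) :
    ∃ u, iteratedDeriv n f u ≠ 0 := by
  by_contra hcon
  push_neg at hcon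
  obtain ⟨P, hP⟩ := snn_poly_of_iteratedDeriv_zero n f hf (by ext u; simpa using hcon u)
  have hdeg : P.degree ≤ 0 := by
    rw [← Polynomial.abs_isBoundedUnder_iff]
    exact ⟨1, eventually_map.mpr (Eventually.of_forall fun x => by rw [← hP]; exact hb x)⟩
  apply hne
  rw [hP, hP, Polynomial.eq_C_of_degree_le_zero hdeg]
  simp



private lemma snn_coeff_one_mem {E : Type*} [AddCommGroup E] [Module ℝ E]
    [TopologicalSpace E] [IsTopologicalAddGroup E] [ContinuousSMul ℝ E] [T2Space E]
    {W : Submodule ℝ E} (hW : IsClosed (W : Set E)) (n : ℕ) (w : ℕ → E)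
    (h : ∀ t : ℝ, ∑ k ∈ Finset.range (n + 2), t ^ k • w k ∈ W) : w 1 ∈ W := by
  set u : ℝ → E := fun t => ∑ k ∈ Finset.range (n + 1), t ^ k • w (k + 1) with hu
  have hcont : Continuous u := by
    apply continuous_finset_sum
    intro k _
    exact (continuous_pow k).smul continuous_const
  have h0 : ∑ k ∈ Finset.range (n + 2), (0:ℝ) ^ k • w k = w 0 := by
    rw [Finset.sum_range_succ' (fun k => (0:ℝ) ^ k • w k) (n+1)]
    rw [Finset.sum_eq_zero fun k _ => by simp [zero_pow]]
    simp
  have humem : ∀ t : ℝ, t ≠ 0 → u t ∈ W := by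
    intro t ht
    have key : t • u t = (∑ k ∈ Finset.range (n + 2), t ^ k • w k) - w 0 := by
      rw [Finset.sum_range_succ' (fun k => t ^ k • w k) (n+1), hu, Finset.smul_sum]
      simp only [pow_zero, one_smul, add_sub_cancel_right, smul_smul]
      refine Finset.sum_congr rfl fun k _ => ?_
      rw [pow_succ]; ring_nf
    have : u t = t⁻¹ • ((∑ k ∈ Finset.range (n + 2), t ^ k • w k) - w 0) := by
      rw [← key, smul_smul, inv_mul_cancel₀ ht, one_smul]
    rw [this]
    exact W.smul_mem _ (W.sub_mem (h t) (h0 ▸ h 0))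
  have hu0 : u 0 = w 1 := by
    show ∑ k ∈ Finset.range (n + 1), (0:ℝ) ^ k • w (k + 1) = w 1
    rw [Finset.sum_range_succ' (fun k => (0:ℝ) ^ k • w (k + 1)) n]
    rw [Finset.sum_eq_zero fun k _ => by simp [zero_pow]]
    simp
  have htend : Tendsto (fun m : ℕ => u (1/(m+1))) atTop (𝓝 (w 1)) := by
    rw [← hu0]
    exact (hcont.tendsto 0).comp tendsto_one_div_add_atTop_nhds_zero_nat
  exact hW.mem_of_tendsto htend (Eventually.of_forall fun m => humem _ (by positivity))

variable {X : Type*} [TopologicalSpace X] [CompactSpace X]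

private lemma snn_conv_ridge_mem {p : ℝ → ℝ} (hp : Continuous p)
    (hp01 : ∀ u : ℝ, p u ∈ Set.Icc (0:ℝ) 1)
    (φ : ContDiffBump (0:ℝ)) (ℓ : C(X, ℝ)) {W : Submodule ℝ C(X, ℝ)}
    (hWc : IsClosed (W : Set C(X,ℝ)))
    (hW : ∀ (b : ℝ) (h : Continuous fun x => p (ℓ x + b)), (⟨_, h⟩ : C(X,ℝ)) ∈ W)
    (g : ℝ → ℝ) (hg : ∀ t, g t = ∫ s, φ.normed volume s * p (t - s)) (b : ℝ)
    (hgc : Continuous fun x => g (ℓ x + b)) :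
    (⟨fun x => g (ℓ x + b), hgc⟩ : C(X,ℝ)) ∈ W := by
  set φn : ℝ → ℝ := φ.normed volume with hφn
  have hφc : Continuous φn := φ.continuous_normed
  set R : ℝ := φ.rOut with hRdef
  have hRpos : 0 < R := φ.rOut_pos
  -- the ridge map, continuous in the shift parameter
  set Pb : ℝ → C(X, ℝ) := fun c => (⟨p, hp⟩ : C(ℝ,ℝ)).comp (ℓ + ContinuousMap.const X c)
    with hPb
  have hPbcont : Continuous Pb := by
    apply Continuous.comp (ContinuousMap.continuous_postcomp (⟨p, hp⟩ : C(ℝ,ℝ)))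
    exact continuous_const.add (ContinuousMap.continuous_const' )
  have hPbapply : ∀ (c : ℝ) (x : X), Pb c x = p (ℓ x + c) := fun c x => rfl
  have hPbW : ∀ c : ℝ, Pb c ∈ W := by
    intro c
    have hcc : Continuous fun x => p (ℓ x + c) := hp.comp (ℓ.continuous.add continuous_const)
    have heq : Pb c = (⟨_, hcc⟩ : C(X,ℝ)) := ContinuousMap.ext fun x => rfl
    rw [heq]
    exact hW c hcc
  set F : ℝ → C(X, ℝ) := fun s => φn s • Pb (b - s) with hF
  have hFcont : Continuous F :=
    (hφc.smul (hPbcont.comp (continuous_const.sub continuous_id)))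
  have hFsupp : HasCompactSupport F := by
    apply HasCompactSupport.intro (isCompact_Icc (a := -R) (b := R))
    intro s hs
    have hsph : φn s = 0 := by
      have : s ∉ Function.support φn := by
        rw [hφn, φ.support_normed_eq]
        intro hmem
        rw [mem_ball_zero_iff, Real.norm_eq_abs] at hmem
        apply hs
        constructor <;> [linarith [abs_lt.mp hmem]; linarith [abs_lt.mp hmem]]
      simpa [Function.mem_support, not_not] using this
    rw [hF]
    simp [hsph]
  have hFint : Integrable F volume := hFcont.integrable_of_hasCompactSupport hFsupp
  have hFW : ∀ s : ℝ, F s ∈ W := fun s => W.smul_mem _ (hPbW _)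
  -- probability measure
  set c2R : ENNReal := ENNReal.ofReal (2 * R) with hc2R
  have hc2R0 : c2R ≠ 0 := by
    rw [hc2R]
    simpa using ENNReal.ofReal_pos.mpr (by linarith) |>.ne'
  have hc2Rtop : c2R ≠ ⊤ := ENNReal.ofReal_ne_top
  set μ : Measure ℝ := c2R⁻¹ • volume.restrict (Set.Icc (-R) R) with hμ
  have hμprob : IsProbabilityMeasure μ := by
    constructor
    rw [hμ]
    simp only [Measure.smul_apply, Measure.restrict_apply MeasurableSet.univ, Set.univ_inter,
      smul_eq_mul]
    rw [Real.volume_Icc, show R - (-R) = 2 * R by ring, ← hc2R]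
    exact ENNReal.inv_mul_cancel hc2R0 hc2Rtop
  have hFintμ : Integrable F μ := by
    rw [hμ]
    exact Integrable.smul_measure (ε := C(X, ℝ)) (hFint.restrict) (ENNReal.inv_ne_top.mpr hc2R0)
  have hμmem : (∫ s, F s ∂μ) ∈ W :=
    W.convex.integral_mem hWc (Eventually.of_forall hFW) hFintμ
  -- rescale
  have hFzero : ∀ s : ℝ, s ∉ Set.Icc (-R) R → F s = 0 := by
    intro s hs
    have hsph : φn s = 0 := by
      by_contra hne
      have : s ∈ Function.support φn := hne
      rw [hφn, φ.support_normed_eq, mem_ball_zero_iff, Real.norm_eq_abs] at this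
      exact hs ⟨by linarith [abs_lt.mp this |>.1], by linarith [abs_lt.mp this |>.2]⟩
    show φn s • Pb (b - s) = 0
    rw [hsph, zero_smul]
  have hIcc : ∫ s in Set.Icc (-R) R, F s = ∫ s, F s :=
    setIntegral_eq_integral_of_forall_compl_eq_zero hFzero
  have h2 : ∫ s, F s ∂μ = (c2R⁻¹).toReal • ∫ s in Set.Icc (-R) R, F s := by
    rw [hμ]
    exact integral_smul_measure F c2R⁻¹
  have htoReal : (c2R⁻¹).toReal = (2*R)⁻¹ := by
    rw [hc2R, ← ENNReal.ofReal_inv_of_pos (by linarith)]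
    exact ENNReal.toReal_ofReal (by positivity)
  have hmain : (∫ s, F s) ∈ W := by
    have heq : (∫ s, F s) = (2*R) • ∫ s, F s ∂μ := by
      rw [h2, hIcc, htoReal, smul_smul, mul_inv_cancel₀ (by linarith : (2*R) ≠ 0), one_smul]
    rw [heq]
    exact W.smul_mem _ hμmem
  -- identify the integral with the target
  have heval : ∀ x : X, (∫ s, F s) x = g (ℓ x + b) := by
    intro x
    have h3 : ∫ s, (ContinuousMap.evalCLM (R := ℝ) x) (F s)
        = (ContinuousMap.evalCLM (R := ℝ) x) (∫ s, F s) :=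
      ContinuousLinearMap.integral_comp_comm _ hFint
    have h4 : ∀ s : ℝ, (ContinuousMap.evalCLM (R := ℝ) x) (F s) = φn s * p (ℓ x + (b - s)) :=
      fun s => rfl
    have h5 : (ContinuousMap.evalCLM (R := ℝ) x) (∫ s, F s) = (∫ s, F s) x := rfl
    rw [← h5, ← h3, hg (ℓ x + b)]
    refine integral_congr_ae (Eventually.of_forall fun s => ?_)
    show (ContinuousMap.evalCLM (R := ℝ) x) (F s) = φn s * p (ℓ x + b - s)
    rw [h4 s, add_sub_assoc]
  have hfinal : (⟨fun x => g (ℓ x + b), hgc⟩ : C(X,ℝ)) = ∫ s, F s :=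
    ContinuousMap.ext fun x => (heval x).symm
  rw [hfinal]
  exact hmain


private lemma snn_monomial_mem {g : ℝ → ℝ} (hg : ContDiff ℝ ∞ g)
    (ℓ : C(X, ℝ)) {W : Submodule ℝ C(X, ℝ)} (hWc : IsClosed (W : Set C(X,ℝ)))
    (hW : ∀ (c u : ℝ) (h : Continuous fun x => g (c * ℓ x + u)), (⟨_, h⟩ : C(X,ℝ)) ∈ W)
    (n : ℕ) (u : ℝ) (hc : Continuous fun x => iteratedDeriv n g u * ℓ x ^ n) :
    (⟨_, hc⟩ : C(X,ℝ)) ∈ W := by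
  haveI : NeBot (𝓝[≠] (0:ℝ)) := NormedField.nhdsNE_neBot (0:ℝ)
  set A : ℝ → ℝ := iteratedDeriv n g with hA
  have hAc : Continuous A := hg.continuous_iteratedDeriv n (le_of_lt (snn_natlt n))
  have hridge : ∀ c u' : ℝ, Continuous fun x => g (c * ℓ x + u') := fun c u' =>
    (hg.continuous).comp ((continuous_const.mul ℓ.continuous).add continuous_const)
  set Φ : ℝ → C(X, ℝ) := fun h =>
    ∑ j ∈ Finset.range (n+1), ((-1:ℝ)^(n+j) * (n.choose j) * (h⁻¹)^n) •
      (⟨fun x => g ((j*h) * ℓ x + u), hridge _ _⟩ : C(X,ℝ)) with hΦ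
  have hΦW : ∀ h : ℝ, Φ h ∈ W :=
    fun h => Submodule.sum_mem W fun j _ => W.smul_mem _ (hW _ _ _)
  have hΦx : ∀ (h : ℝ) (x : X),
      Φ h x = ∑ j ∈ Finset.range (n+1),
        ((-1:ℝ)^(n+j) * (n.choose j) * (h⁻¹)^n) * g ((j*h) * ℓ x + u) := by
    intro h x
    rw [hΦ]
    simp
  have hΦfd : ∀ (h : ℝ) (x : X), Φ h x = (h⁻¹)^n * snnFd (h * ℓ x) n g u := by
    intro h x
    rw [hΦx, snnFd_sum (h * ℓ x) n g u, Finset.mul_sum]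
    refine Finset.sum_congr rfl fun j _ => ?_
    have harg : u + (j:ℝ) * (h * ℓ x) = (j*h) * ℓ x + u := by ring
    rw [harg]; ring
  set T : C(X,ℝ) := (⟨_, hc⟩ : C(X,ℝ)) with hT
  set C : ℝ := ‖ℓ‖ + 1 with hCdef
  have hC0 : 0 < C := by
    have := norm_nonneg ℓ; rw [hCdef]; linarith
  have hlx : ∀ x : X, |ℓ x| ≤ C := by
    intro x
    have := ℓ.norm_coe_le_norm x
    rw [Real.norm_eq_abs] at this
    rw [hCdef]; linarith
  have htend : Tendsto Φ (𝓝[≠] (0:ℝ)) (𝓝 T) := by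
    rw [Metric.tendsto_nhdsWithin_nhds]
    intro ε hε
    set ε₀ : ℝ := ε / (2 * (n+1) * C^n) with hε₀
    have hCn : (0:ℝ) < C^n := by positivity
    have hε₀pos : 0 < ε₀ := by rw [hε₀]; positivity
    obtain ⟨δ₀, hδ₀pos, hδ₀⟩ := Metric.continuousAt_iff.mp (hAc.continuousAt (x := u)) ε₀ hε₀pos
    refine ⟨δ₀ / ((n+1) * C), by positivity, ?_⟩
    intro h hne hd
    have hne' : h ≠ 0 := hne
    rw [Real.dist_eq, sub_zero] at hd
    have hδd : |h| * (((n:ℝ)+1) * C) < δ₀ := (lt_div_iff₀ (by positivity)).mp hd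
    rw [ContinuousMap.dist_lt_iff hε]
    intro x
    have hosc : ∀ v w : ℝ, |v - u| ≤ ((n:ℝ)+1) * |h * ℓ x| → |w - u| ≤ ((n:ℝ)+1) * |h * ℓ x| →
        |A v - A w| ≤ 2*ε₀ := by
      intro v w hv hw
      have hsb : |h * ℓ x| ≤ |h| * C := by
        rw [abs_mul]; exact mul_le_mul_of_nonneg_left (hlx x) (abs_nonneg h)
      have hrad : ((n:ℝ)+1) * |h * ℓ x| < δ₀ := by
        have h1 : ((n:ℝ)+1) * |h * ℓ x| ≤ ((n:ℝ)+1) * (|h| * C) :=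
          mul_le_mul_of_nonneg_left hsb (by positivity)
        nlinarith [abs_nonneg h]
      have hv' : |A v - A u| < ε₀ := by
        have := hδ₀ (show dist v u < δ₀ by rw [Real.dist_eq]; linarith)
        rwa [Real.dist_eq] at this
      have hw' : |A w - A u| < ε₀ := by
        have := hδ₀ (show dist w u < δ₀ by rw [Real.dist_eq]; linarith)
        rwa [Real.dist_eq] at this
      calc |A v - A w| ≤ |A v - A u| + |A u - A w| := abs_sub_le _ _ _
        _ ≤ 2*ε₀ := by rw [abs_sub_comm (A u) (A w)]; linarith
    have hbound := snnFdBound (h * ℓ x) n g hg u (2*ε₀) (by positivity) hosc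
    have hTx : T x = A u * ℓ x ^ n := rfl
    have hkey : Φ h x - T x = (h⁻¹)^n * (snnFd (h * ℓ x) n g u - (h * ℓ x)^n * A u) := by
      rw [hΦfd h x, hTx]
      have hid : (h⁻¹)^n * (h * ℓ x)^n = ℓ x ^ n := by
        rw [← mul_pow, inv_mul_cancel_left₀ hne']
      linear_combination (A u) * hid
    have habs2 : |h⁻¹|^n * |h * ℓ x|^n = |ℓ x|^n := by
      rw [← mul_pow, ← abs_mul, inv_mul_cancel_left₀ hne']
    have hlt : (n:ℝ) * (2*ε₀) * C^n < ε := by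
      have key : 2*((n:ℝ)+1)*C^n*ε₀ = ε := by
        rw [hε₀]; field_simp
      nlinarith [hε₀pos, hCn]
    have hfin : dist (Φ h x) (T x) < ε := by
      rw [Real.dist_eq, hkey, abs_mul, abs_pow]
      calc |h⁻¹|^n * |snnFd (h * ℓ x) n g u - (h * ℓ x)^n * A u|
          ≤ |h⁻¹|^n * ((n:ℝ) * (2*ε₀) * |h * ℓ x|^n) := by
            apply mul_le_mul_of_nonneg_left _ (by positivity)
            exact hbound
        _ = (n:ℝ) * (2*ε₀) * (|h⁻¹|^n * |h * ℓ x|^n) := by ring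
        _ = (n:ℝ) * (2*ε₀) * |ℓ x|^n := by rw [habs2]
        _ ≤ (n:ℝ) * (2*ε₀) * C^n := by
            apply mul_le_mul_of_nonneg_left _ (by positivity)
            exact pow_le_pow_left₀ (abs_nonneg _) (hlx x) n
        _ < ε := hlt
    exact hfin
  exact hWc.mem_of_tendsto htend (Eventually.of_forall hΦW)

end SNNAuxAll

open MeasureTheory Filter Topology Function

/-- Theorem 7 of the paper: universal approximation by two-layer SNNs with
stochastic spiking neurons. If the excitation probability function `p` takes
values in `[0,1]`, is continuous, `l`-times differentiable off a Lebesgue-null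
set `K₀`, and each of its first `l` derivatives is integrable on `ℝ \ K₀` with
nonzero integral, then the expected outputs
`x ↦ ∑ₖ wₖ · p(⟪aₖ, x⟫ + bₖ)` of two-layer stochastic SNNs are dense in
`C(K, ℝ)` (sup norm) for every compact `K ⊆ ℝ^M`. -/
theorem stochastic_snn_universal_approximation (M : ℕ) (hM : 1 ≤ M)
    (K : Set (EuclideanSpace ℝ (Fin M))) (hK : IsCompact K)
    (p : ℝ → ℝ) (hp : Continuous p) (hp01 : ∀ u : ℝ, p u ∈ Set.Icc (0:ℝ) 1)
    (l : ℕ) (hl : 1 ≤ l)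
    (K₀ : Set ℝ) (hK₀ : MeasureTheory.volume K₀ = 0)
    (hdiff : ∀ r < l, ∀ u : ℝ, u ∉ K₀ → DifferentiableAt ℝ (iteratedDeriv r p) u)
    (hint : ∀ r : ℕ, 1 ≤ r → r ≤ l →
      MeasureTheory.IntegrableOn (iteratedDeriv r p) K₀ᶜ MeasureTheory.volume ∧
      0 < |∫ u in K₀ᶜ, iteratedDeriv r p u|) :
    ∀ g : EuclideanSpace ℝ (Fin M) → ℝ, ContinuousOn g K → ∀ ε : ℝ, 0 < ε →
      ∃ (n : ℕ) (w b : Fin n → ℝ) (a : Fin n → EuclideanSpace ℝ (Fin M)),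
        ∀ x ∈ K, |g x - ∑ k, w k * p (⟪a k, x⟫ + b k)| < ε := by
  intro gt hgt ε hε
  haveI : CompactSpace K := isCompact_iff_compactSpace.mp hK
  classical
  -- `p` is not constant
  have hpnc : ∃ u₁ u₂ : ℝ, p u₁ ≠ p u₂ := by
    by_contra hcon
    push_neg at hcon
    obtain ⟨-, hpos⟩ := hint 1 le_rfl hl
    have hconst : p = fun _ => p 0 := funext fun u => hcon u 0
    have hzero : iteratedDeriv 1 p = fun _ => (0:ℝ) := by
      rw [iteratedDeriv_one, hconst]
      funext u; simp
    rw [hzero] at hpos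
    simp at hpos
  obtain ⟨u₁, u₂, hu12⟩ := hpnc
  -- ridge functions and the closed span
  have lcont : ∀ a : EuclideanSpace ℝ (Fin M),
      Continuous fun x : K => (⟪a, (x : EuclideanSpace ℝ (Fin M))⟫ : ℝ) := fun a =>
    Continuous.inner continuous_const continuous_subtype_val
  set L : EuclideanSpace ℝ (Fin M) → C(K, ℝ) := fun a => ⟨_, lcont a⟩ with hLdef
  set Rset : Set C(K, ℝ) :=
    {f | ∃ (a : EuclideanSpace ℝ (Fin M)) (b' : ℝ), ∀ x : K,
      f x = p (⟪a, (x : EuclideanSpace ℝ (Fin M))⟫ + b')} with hRset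
  set V : Submodule ℝ C(K,ℝ) := Submodule.span ℝ Rset with hV
  set W : Submodule ℝ C(K,ℝ) := V.topologicalClosure with hWdef
  have hWc : IsClosed (W : Set C(K,ℝ)) := Submodule.isClosed_topologicalClosure V
  have hWp : ∀ (a : EuclideanSpace ℝ (Fin M)) (b' : ℝ)
      (h : Continuous fun x : K => p ((L a) x + b')),
      (⟨_, h⟩ : C(K,ℝ)) ∈ W := fun a b' h =>
    V.le_topologicalClosure (Submodule.subset_span ⟨a, b', fun x => rfl⟩)
  -- bump function setup
  set ε₀ : ℝ := |p u₁ - p u₂| / 3 with hε₀def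
  have hppos : 0 < |p u₁ - p u₂| := abs_pos.mpr (sub_ne_zero.mpr hu12)
  have hε₀pos : 0 < ε₀ := by rw [hε₀def]; positivity
  obtain ⟨r₁, hr₁pos, hr₁⟩ := Metric.continuousAt_iff.mp (hp.continuousAt (x := u₁)) ε₀ hε₀pos
  obtain ⟨r₂, hr₂pos, hr₂⟩ := Metric.continuousAt_iff.mp (hp.continuousAt (x := u₂)) ε₀ hε₀pos
  set r : ℝ := min r₁ r₂ / 2 with hrdef
  have hrpos : 0 < r := by rw [hrdef]; positivity
  have hrr₁ : r < r₁ := by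
    rw [hrdef]; have := min_le_left r₁ r₂; linarith [lt_min hr₁pos hr₂pos]
  have hrr₂ : r < r₂ := by
    rw [hrdef]; have := min_le_right r₁ r₂; linarith [lt_min hr₁pos hr₂pos]
  set φ : ContDiffBump (0:ℝ) := ⟨r/2, r, by positivity, by linarith⟩ with hφdef
  set φn : ℝ → ℝ := φ.normed volume with hφn
  set g : ℝ → ℝ := MeasureTheory.convolution φn p (ContinuousLinearMap.lsmul ℝ ℝ) volume
    with hgdef
  have hgeq : ∀ t, g t = ∫ s, φn s * p (t - s) := by
    intro t
    rw [hgdef, MeasureTheory.convolution_def]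
    simp only [ContinuousLinearMap.lsmul_apply, smul_eq_mul]
  have hgsmooth : ContDiff ℝ (⊤ : ℕ∞) g := by
    rw [hgdef, hφn]
    exact HasCompactSupport.contDiff_convolution_left _ φ.hasCompactSupport_normed
      φ.contDiff_normed (hp.locallyIntegrable)
  have hφint : Integrable φn volume := φ.integrable_normed
  have hgint : ∀ t : ℝ, Integrable (fun s => φn s * p (t - s)) := by
    intro t
    have hcont : Continuous fun s => φn s * p (t - s) :=
      φ.continuous_normed.mul (hp.comp (continuous_const.sub continuous_id))
    exact hcont.integrable_of_hasCompactSupport φ.hasCompactSupport_normed.mul_right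
  have hg01 : ∀ t, 0 ≤ g t ∧ g t ≤ 1 := by
    intro t
    constructor
    · rw [hgeq]
      exact integral_nonneg fun s => mul_nonneg (φ.nonneg_normed s) (hp01 _).1
    · rw [hgeq]
      calc (∫ s, φn s * p (t - s)) ≤ ∫ s, φn s := by
            refine integral_mono (hgint t) hφint fun s => ?_
            exact mul_le_of_le_one_right (φ.nonneg_normed s) (hp01 _).2
        _ = 1 := φ.integral_normed
  have hgb : ∀ t, |g t| ≤ 1 := fun t => abs_le.mpr ⟨by linarith [(hg01 t).1], (hg01 t).2⟩
  -- g is close to p at u₁ and u₂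
  have hφzero : ∀ s : ℝ, ¬ (|s| < r) → φn s = 0 := by
    intro s hs
    by_contra hne
    have hmem : s ∈ Function.support φn := hne
    rw [hφn, φ.support_normed_eq, mem_ball_zero_iff, Real.norm_eq_abs] at hmem
    exact hs hmem
  have hclose : ∀ u' : ℝ, (∀ s : ℝ, |s| < r → |p (u' - s) - p u'| ≤ ε₀) → |g u' - p u'| ≤ ε₀ := by
    intro u' hyp
    have hintd : Integrable (fun s => φn s * (p (u' - s) - p u')) :=
      ((hgint u').sub (hφint.mul_const (p u'))).congr
        (Eventually.of_forall fun s => by simp only [Pi.sub_apply]; ring)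
    have e1 : g u' - p u' = ∫ s, φn s * (p (u' - s) - p u') := by
      have e3 : (∫ s, φn s * (p (u' - s) - p u'))
          = (∫ s, φn s * p (u' - s)) - ∫ s, φn s * p u' := by
        rw [← integral_sub (hgint u') (hφint.mul_const _)]
        refine integral_congr_ae (Eventually.of_forall fun s => ?_)
        simp only [Pi.sub_apply]
        ring
      rw [e3, hgeq]
      congr 1
      have e4 : (∫ s, φn s * p u') = p u' := by
        rw [integral_mul_const, φ.integral_normed, one_mul]
      exact e4.symm
    rw [e1]
    have hintd2 : Integrable (fun s => |φn s| * |p (u' - s) - p u'|) :=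
      hintd.abs.congr (Eventually.of_forall fun s => abs_mul _ _)
    calc |∫ s, φn s * (p (u' - s) - p u')| ≤ ∫ s, |φn s| * |p (u' - s) - p u'| := by
          simpa [Real.norm_eq_abs, abs_mul] using
            norm_integral_le_integral_norm (μ := volume)
              (f := fun s => φn s * (p (u' - s) - p u'))
      _ ≤ ∫ s, φn s * ε₀ := by
          refine integral_mono hintd2 (hφint.mul_const ε₀) fun s => ?_
          show |φn s| * |p (u' - s) - p u'| ≤ φn s * ε₀
          rw [abs_of_nonneg (show (0:ℝ) ≤ φn s from φ.nonneg_normed s)]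
          by_cases hs : |s| < r
          · exact mul_le_mul_of_nonneg_left (hyp s hs) (φ.nonneg_normed s)
          · have h0 : φn s = 0 := hφzero s hs
            rw [h0]
            simp [hε₀pos.le]
      _ = ε₀ := by rw [integral_mul_const, φ.integral_normed, one_mul]
  have hgu₁ : |g u₁ - p u₁| ≤ ε₀ := by
    refine hclose u₁ fun s hs => ?_
    have hd : dist (u₁ - s) u₁ < r₁ := by
      rw [Real.dist_eq, show u₁ - s - u₁ = -s from by ring, abs_neg]
      exact lt_trans hs hrr₁
    have := hr₁ hd
    rw [Real.dist_eq] at this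
    linarith
  have hgu₂ : |g u₂ - p u₂| ≤ ε₀ := by
    refine hclose u₂ fun s hs => ?_
    have hd : dist (u₂ - s) u₂ < r₂ := by
      rw [Real.dist_eq, show u₂ - s - u₂ = -s from by ring, abs_neg]
      exact lt_trans hs hrr₂
    have := hr₂ hd
    rw [Real.dist_eq] at this
    linarith
  have hgne : g u₁ ≠ g u₂ := by
    intro heq
    have h3 : |p u₁ - p u₂| ≤ 2 * ε₀ := by
      calc |p u₁ - p u₂| = |(p u₁ - g u₁) + (g u₂ - p u₂)| := by rw [heq]; congr 1; ring
        _ ≤ |p u₁ - g u₁| + |g u₂ - p u₂| := abs_add_le _ _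
        _ ≤ 2 * ε₀ := by
            rw [abs_sub_comm (p u₁) (g u₁)]
            linarith
    rw [hε₀def] at h3
    linarith
  -- g-ridges are in W
  have hWg : ∀ (a : EuclideanSpace ℝ (Fin M)) (b' : ℝ)
      (h : Continuous fun x : K => g ((L a) x + b')), (⟨_, h⟩ : C(K,ℝ)) ∈ W := by
    intro a b' h
    exact snn_conv_ridge_mem hp hp01 φ (L a) hWc (fun b'' h'' => hWp a b'' h'') g hgeq b' h
  have hWg' : ∀ (a : EuclideanSpace ℝ (Fin M)) (c u' : ℝ)
      (h : Continuous fun x : K => g (c * (L a) x + u')), (⟨_, h⟩ : C(K,ℝ)) ∈ W := by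
    intro a c u' h
    have h2 : Continuous fun x : K => g ((L (c • a)) x + u') :=
      hgsmooth.continuous.comp ((lcont (c • a)).add continuous_const)
    have hmem := hWg (c • a) u' h2
    have heq : (⟨fun x : K => g ((L (c • a)) x + u'), h2⟩ : C(K,ℝ))
        = ⟨fun x => g (c * (L a) x + u'), h⟩ := by
      ext x
      show g ((L (c • a)) x + u') = g (c * (L a) x + u')
      congr 1
      show (⟪c • a, (x : EuclideanSpace ℝ (Fin M))⟫ : ℝ) + u' = c * ⟪a, (x : EuclideanSpace ℝ (Fin M))⟫ + u'
      rw [real_inner_smul_left]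
    rwa [heq] at hmem
  -- monomials are in W
  have hmono : ∀ (a : EuclideanSpace ℝ (Fin M)) (n : ℕ)
      (h : Continuous fun x : K => (L a) x ^ n), (⟨_, h⟩ : C(K,ℝ)) ∈ W := by
    intro a n h
    obtain ⟨u, hu⟩ := snn_exists_iteratedDeriv_ne_zero hgsmooth hgb hgne n
    have hcT : Continuous fun x : K => iteratedDeriv n g u * (L a) x ^ n :=
      continuous_const.mul h
    have hT := snn_monomial_mem hgsmooth (L a) hWc (hWg' a) n u hcT
    have hsm := W.smul_mem (iteratedDeriv n g u)⁻¹ hT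
    have heq : (iteratedDeriv n g u)⁻¹ • (⟨_, hcT⟩ : C(K,ℝ)) = (⟨_, h⟩ : C(K,ℝ)) := by
      ext x
      show (iteratedDeriv n g u)⁻¹ * (iteratedDeriv n g u * (L a) x ^ n) = (L a) x ^ n
      rw [inv_mul_cancel_left₀ hu]
    rwa [heq] at hsm
  -- products of linear forms are in W
  have hPcont : ∀ lst : List (EuclideanSpace ℝ (Fin M)),
      Continuous fun x : K => (lst.map (fun v => (L v) x)).prod := by
    intro lst
    induction lst with
    | nil => simpa using continuous_const
    | cons v l ih => simp only [List.map_cons, List.prod_cons]; exact (L v).continuous.mul ih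
  have hprod : ∀ (lst : List (EuclideanSpace ℝ (Fin M))) (n : ℕ)
      (a : EuclideanSpace ℝ (Fin M))
      (h : Continuous fun x : K => (lst.map (fun v => (L v) x)).prod * (L a) x ^ n),
      (⟨_, h⟩ : C(K,ℝ)) ∈ W := by
    intro lst
    induction lst with
    | nil =>
      intro n a h
      have heq : (⟨_, h⟩ : C(K,ℝ)) = ⟨fun x => (L a) x ^ n, (L a).continuous.pow n⟩ := by
        ext x
        show ((List.nil.map (fun v => (L v) x)).prod : ℝ) * (L a) x ^ n = (L a) x ^ n
        simp
      rw [heq]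
      exact hmono a n _
    | cons v lst ih =>
      intro n a h
      set wfam : ℕ → C(K,ℝ) := fun j =>
        ⟨fun x => (((n+1).choose (n+1-j) : ℕ) : ℝ) *
            ((lst.map (fun v' => (L v') x)).prod * (L a) x ^ (n+1-j) * (L v) x ^ j),
          continuous_const.mul (((hPcont lst).mul ((L a).continuous.pow _)).mul
            ((L v).continuous.pow _))⟩ with hwfam
      have hWfam : ∀ t : ℝ, ∑ j ∈ Finset.range (n+2), t ^ j • wfam j ∈ W := by
        intro t
        have hcont' : Continuous fun x : K =>
            (lst.map (fun v' => (L v') x)).prod * (L (a + t • v)) x ^ (n+1) :=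
          (hPcont lst).mul ((L (a + t • v)).continuous.pow _)
        have hAt := ih (n+1) (a + t • v) hcont'
        have heq : ∑ j ∈ Finset.range (n+2), t ^ j • wfam j
            = ⟨fun x => (lst.map (fun v' => (L v') x)).prod * (L (a + t • v)) x ^ (n+1),
                hcont'⟩ := by
          ext x
          simp only [ContinuousMap.coe_sum, Finset.sum_apply, ContinuousMap.coe_smul,
            Pi.smul_apply, smul_eq_mul, hwfam, ContinuousMap.coe_mk]
          have hLat : (L (a + t • v)) x = (L a) x + t * (L v) x := by
            show (⟪a + t • v, (x : EuclideanSpace ℝ (Fin M))⟫ : ℝ) = _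
            rw [inner_add_left, real_inner_smul_left]
            rfl
          rw [hLat, add_pow, ← Finset.sum_range_reflect, Finset.mul_sum]
          refine Finset.sum_congr rfl fun j hj => ?_
          have hjle : j ≤ n + 1 := Nat.lt_succ_iff.mp (Finset.mem_range.mp hj)
          rw [show n + 2 - 1 - j = n + 1 - j from by omega, Nat.sub_sub_self hjle, mul_pow]
          ring
        rw [heq]
        exact hAt
      have h1 := snn_coeff_one_mem hWc n wfam hWfam
      have h2 := W.smul_mem (((n:ℝ)+1))⁻¹ h1
      have heq2 : (((n:ℝ)+1))⁻¹ • wfam 1 = (⟨_, h⟩ : C(K,ℝ)) := by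
        ext x
        show (((n:ℝ)+1))⁻¹ * ((((n+1).choose (n+1-1) : ℕ) : ℝ) *
            ((lst.map (fun v' => (L v') x)).prod * (L a) x ^ (n+1-1) * (L v) x ^ 1))
          = ((v :: lst).map (fun v' => (L v') x)).prod * (L a) x ^ n
        rw [show n+1-1 = n from rfl, Nat.choose_succ_self_right]
        have hne : ((n:ℝ)+1) ≠ 0 := by positivity
        rw [List.map_cons, List.prod_cons]
        push_cast
        field_simp
      rwa [heq2] at h2
  -- Stone-Weierstrass
  set SA : Subalgebra ℝ C(K,ℝ) := Algebra.adjoin ℝ (Set.range L) with hSAdef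
  have hmonoid : ∀ c ∈ Submonoid.closure (Set.range L), c ∈ W := by
    intro c hc
    have hex : ∃ lst : List (EuclideanSpace ℝ (Fin M)),
        ∀ x : K, c x = (lst.map (fun v => (L v) x)).prod := by
      refine Submonoid.closure_induction ?_ ?_ ?_ hc
      · rintro f ⟨a, rfl⟩
        exact ⟨[a], fun x => by simp⟩
      · exact ⟨[], fun x => by simp⟩
      · rintro f f' _ _ ⟨l1, h1⟩ ⟨l2, h2⟩
        exact ⟨l1 ++ l2, fun x => by simp [h1 x, h2 x]⟩
    obtain ⟨lst, hlst⟩ := hex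
    have hcont2 : Continuous fun x : K =>
        (lst.map (fun v => (L v) x)).prod * (L 0) x ^ 0 :=
      (hPcont lst).mul ((L 0).continuous.pow 0)
    have hmem := hprod lst 0 0 hcont2
    have heq : (⟨_, hcont2⟩ : C(K,ℝ)) = c := by
      ext x
      show (lst.map (fun v => (L v) x)).prod * (L 0) x ^ 0 = c x
      rw [hlst x]
      simp
    rwa [heq] at hmem
  have hAle : (SA : Set C(K,ℝ)) ⊆ (W : Set C(K,ℝ)) := by
    intro f hf
    have hf' : f ∈ Submodule.span ℝ
        ((Submonoid.closure (Set.range L) : Submonoid C(K,ℝ)) : Set C(K,ℝ)) := by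
      have := Algebra.adjoin_eq_span (R := ℝ) (s := Set.range L)
      rw [hSAdef] at hf
      have hf2 : f ∈ Subalgebra.toSubmodule (Algebra.adjoin ℝ (Set.range L)) := hf
      rwa [this] at hf2
    exact Submodule.span_le.mpr (fun c hc => hmonoid c hc) hf'
  have hsep : SA.SeparatesPoints := by
    intro x y hxy
    have hsub : ((x : EuclideanSpace ℝ (Fin M)) - y) ≠ 0 := by
      rw [sub_ne_zero]
      exact fun hcon => hxy (Subtype.ext hcon)
    refine ⟨L ((x : EuclideanSpace ℝ (Fin M)) - y), ⟨L _, Algebra.subset_adjoin ⟨_, rfl⟩, rfl⟩, ?_⟩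
    intro hcon
    apply hsub
    have h6 : (⟪(x : EuclideanSpace ℝ (Fin M)) - y, (x : EuclideanSpace ℝ (Fin M))⟫ : ℝ)
        = ⟪(x : EuclideanSpace ℝ (Fin M)) - y, (y : EuclideanSpace ℝ (Fin M))⟫ := hcon
    have h5 : (⟪(x : EuclideanSpace ℝ (Fin M)) - y,
        (x : EuclideanSpace ℝ (Fin M)) - (y : EuclideanSpace ℝ (Fin M))⟫ : ℝ) = 0 := by
      rw [inner_sub_right]
      rw [h6, sub_self]
    exact inner_self_eq_zero.mp h5
  have htop := ContinuousMap.subalgebra_topologicalClosure_eq_top_of_separatesPoints SA hsep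
  have hWtop : ∀ f : C(K,ℝ), f ∈ W := by
    intro f
    have h1 : f ∈ SA.topologicalClosure := by rw [htop]; trivial
    have h2 : f ∈ closure (SA : Set C(K,ℝ)) := h1
    have h3 : f ∈ closure (W : Set C(K,ℝ)) := closure_mono hAle h2
    rwa [hWc.closure_eq] at h3
  -- conclude
  set G : C(K,ℝ) := ⟨K.restrict gt, hgt.restrict⟩ with hGdef
  have hGclos : G ∈ closure (V : Set C(K,ℝ)) := hWtop G
  obtain ⟨v, hvV, hvd⟩ := Metric.mem_closure_iff.mp hGclos ε hε
  obtain ⟨m, cf, fs, hsum⟩ := Submodule.mem_span_set'.mp hvV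
  choose aa bb hab using fun i => (fs i).2
  refine ⟨m, cf, bb, aa, ?_⟩
  intro x hx
  have h1 : dist (G ⟨x, hx⟩) (v ⟨x, hx⟩) ≤ dist G v := ContinuousMap.dist_apply_le_dist _
  have h2 : v ⟨x, hx⟩ = ∑ k, cf k * p (⟪aa k, x⟫ + bb k) := by
    rw [← hsum]
    simp only [ContinuousMap.coe_sum, Finset.sum_apply, ContinuousMap.coe_smul,
      Pi.smul_apply, smul_eq_mul]
    refine Finset.sum_congr rfl fun k _ => ?_
    rw [hab k ⟨x, hx⟩]
  have h3 : G ⟨x, hx⟩ = gt x := rfl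
  calc |gt x - ∑ k, cf k * p (⟪aa k, x⟫ + bb k)|
      = |G ⟨x,hx⟩ - v ⟨x,hx⟩| := by rw [h3, h2]
    _ = dist (G ⟨x,hx⟩) (v ⟨x,hx⟩) := (Real.dist_eq _ _).symm
    _ ≤ dist G v := h1
    _ < ε := hvd
end

section
/- Let L ≥ 1, let p^{(1)},…,p^{(L)} ∈ [0,1], and set p₀ = max_{l∈[L]} p^{(l)}. On a probability space let α, α', α'' : Ω → {0,1}^L be random vectors such that the 3L coordinates α_l, α'_l, α''_l (l ∈ [L]) are mutually independent and each of α_l, α'_l, α''_l is Bernoulli(p^{(l)})-distributed. Then for every x ∈ ℝ^L: (i) E[(∏_{l=1}^{L} α_l)·‖x ⊙ α'‖₂] ≤ p₀^{(L+1)/2}·‖x‖₂, and (ii) E[(∏_{l=1}^{L} α_l)·‖x ⊙ α' ⊙ α''‖₂] ≤ p₀^{(L+2)/2}·‖x‖₂, where ⊙ denotes the coordinatewise (Hadamard) product and ‖·‖₂ the Euclidean norm on ℝ^L. -/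
open MeasureTheory ProbabilityTheory

lemma int01_aux {Ω : Type*} [MeasurableSpace Ω] (μ : Measure Ω) [IsProbabilityMeasure μ]
    {f : Ω → ℝ} (hf : Measurable f) (h : ∀ ω, f ω = 0 ∨ f ω = 1) :
    ∫ ω, f ω ∂μ = (μ {ω | f ω = 1}).toReal := by
  have hfe : f = Set.indicator {ω | f ω = 1} (fun _ => (1:ℝ)) := by
    funext ω
    rcases h ω with h0 | h1
    · rw [Set.indicator_of_notMem (by simp [Set.mem_setOf_eq, h0]), h0]
    · rw [Set.indicator_of_mem (by simpa [Set.mem_setOf_eq] using h1), h1]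
  have hs : MeasurableSet {ω | f ω = 1} := hf (measurableSet_singleton 1)
  conv_lhs => rw [hfe]
  rw [integral_indicator_const (1:ℝ) hs, smul_eq_mul, mul_one]
  rfl

lemma integrable01_aux {Ω : Type*} [MeasurableSpace Ω] (μ : Measure Ω) [IsProbabilityMeasure μ]
    {f : Ω → ℝ} (hf : Measurable f) (h : ∀ ω, f ω = 0 ∨ f ω = 1) :
    Integrable f μ :=
  memLp_one_iff_integrable.mp <|
    MemLp.of_bound hf.aestronglyMeasurable 1
      (Filter.Eventually.of_forall fun ω => by rcases h ω with h'|h' <;> simp [h'])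

lemma cs_aux {Ω : Type*} [MeasurableSpace Ω] (μ : Measure Ω) [IsProbabilityMeasure μ]
    {A g : Ω → ℝ} (hA : Measurable A) (hg : Measurable g)
    (hA01 : ∀ ω, A ω = 0 ∨ A ω = 1) (hg0 : ∀ ω, 0 ≤ g ω)
    (C : ℝ) (hgC : ∀ ω, g ω ≤ C) :
    ∫ ω, A ω * g ω ∂μ ≤ ((∫ ω, A ω ∂μ) * ∫ ω, g ω ^ 2 ∂μ) ^ ((1:ℝ)/2) := by
  have hconj : (2:ℝ).HolderConjugate 2 := ⟨by norm_num, by norm_num, by norm_num⟩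
  have hAm : MemLp A (ENNReal.ofReal 2) μ :=
    MemLp.of_bound hA.aestronglyMeasurable 1
      (Filter.Eventually.of_forall fun ω => by rcases hA01 ω with h|h <;> simp [h])
  have hgm : MemLp g (ENNReal.ofReal 2) μ :=
    MemLp.of_bound hg.aestronglyMeasurable C
      (Filter.Eventually.of_forall fun ω => by
        rw [Real.norm_of_nonneg (hg0 ω)]; exact hgC ω)
  have H := integral_mul_le_Lp_mul_Lq_of_nonneg (μ := μ) hconj
    (Filter.Eventually.of_forall fun ω => by rcases hA01 ω with h|h <;> simp [h])
    (Filter.Eventually.of_forall hg0) hAm hgm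
  have h1 : ∫ ω, A ω ^ (2:ℝ) ∂μ = ∫ ω, A ω ∂μ := by
    refine integral_congr_ae (Filter.Eventually.of_forall fun ω => ?_)
    rcases hA01 ω with h|h <;> simp [h]
  have h2 : ∀ ω, g ω ^ (2:ℝ) = g ω ^ 2 := fun ω => by
    rw [show (2:ℝ) = ((2:ℕ):ℝ) by norm_num, Real.rpow_natCast]
  rw [h1] at H
  simp only [h2] at H
  refine H.trans (le_of_eq ?_)
  rw [← Real.mul_rpow (integral_nonneg fun ω => by rcases hA01 ω with h|h <;> simp [h])
    (integral_nonneg fun ω => sq_nonneg _)]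

lemma rpow_half_pow_aux (p₀ : ℝ) (h : 0 ≤ p₀) (n : ℕ) :
    (p₀ ^ n) ^ ((1:ℝ)/2) = p₀ ^ ((n:ℝ)/2) := by
  rw [← Real.rpow_natCast p₀ n, ← Real.rpow_mul h, mul_one_div]

/-- Second half of Lemma 4 ('dropout_3') of the paper: for mutually independent
Bernoulli masks `α, α', α''` with parameters `p^{(l)} ∈ [0,1]` and
`p₀ = max_l p^{(l)}`,
`E[(∏_l α_l)·‖x ⊙ α'‖₂] ≤ p₀^{(L+1)/2} ‖x‖₂` and
`E[(∏_l α_l)·‖x ⊙ α' ⊙ α''‖₂] ≤ p₀^{(L+2)/2} ‖x‖₂`. -/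
theorem bernoulli_mask_product_norm_bounds {Ω : Type*} [MeasurableSpace Ω]
    (μ : Measure Ω) [IsProbabilityMeasure μ]
    (L : ℕ) (hL : 1 ≤ L)
    (p : Fin L → ℝ) (hp : ∀ l, p l ∈ Set.Icc (0:ℝ) 1)
    (p₀ : ℝ) (hp₀ : IsGreatest (Set.range p) p₀)
    (α α' α'' : Fin L → Ω → ℝ)
    (hmeas : ∀ l, Measurable (α l)) (hmeas' : ∀ l, Measurable (α' l))
    (hmeas'' : ∀ l, Measurable (α'' l))
    (h01 : ∀ l ω, α l ω = 0 ∨ α l ω = 1)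
    (h01' : ∀ l ω, α' l ω = 0 ∨ α' l ω = 1)
    (h01'' : ∀ l ω, α'' l ω = 0 ∨ α'' l ω = 1)
    (hber : ∀ l, μ {ω | α l ω = 1} = ENNReal.ofReal (p l))
    (hber' : ∀ l, μ {ω | α' l ω = 1} = ENNReal.ofReal (p l))
    (hber'' : ∀ l, μ {ω | α'' l ω = 1} = ENNReal.ofReal (p l))
    (hindep : iIndepFun
      (Sum.elim α (Sum.elim α' α'')) μ) :
    ∀ x : Fin L → ℝ,
      (∫ ω, (∏ l, α l ω) * Real.sqrt (∑ l, (x l * α' l ω) ^ 2) ∂μ ≤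
        p₀ ^ (((L : ℝ) + 1) / 2) * Real.sqrt (∑ l, (x l) ^ 2)) ∧
      (∫ ω, (∏ l, α l ω) * Real.sqrt (∑ l, (x l * α' l ω * α'' l ω) ^ 2) ∂μ ≤
        p₀ ^ (((L : ℝ) + 2) / 2) * Real.sqrt (∑ l, (x l) ^ 2)) := by
  intro x
  -- basic facts about p₀
  obtain ⟨l₀, hl₀⟩ := hp₀.1
  have hp00 : 0 ≤ p₀ := hl₀ ▸ (hp l₀).1
  have hple : ∀ l, p l ≤ p₀ := fun l => hp₀.2 (Set.mem_range_self l)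
  set S : ℝ := ∑ l, (x l) ^ 2 with hS_def
  have hS : 0 ≤ S := Finset.sum_nonneg fun l _ => sq_nonneg _
  -- the product mask A
  have hA01 : ∀ ω, (∏ l, α l ω) = 0 ∨ (∏ l, α l ω) = 1 := by
    intro ω
    by_cases h : ∀ l, α l ω = 1
    · exact Or.inr (Finset.prod_eq_one fun l _ => h l)
    · push_neg at h
      obtain ⟨l, hl⟩ := h
      exact Or.inl (Finset.prod_eq_zero (Finset.mem_univ l) ((h01 l ω).resolve_right hl))
  have hAmeas : Measurable fun ω => ∏ l, α l ω :=
    Finset.measurable_prod _ fun l _ => hmeas l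
  -- preimage descriptions
  have hpre : ∀ l, α l ⁻¹' ({1} : Set ℝ) = {ω | α l ω = 1} := by
    intro l; ext ω; simp
  have hpre' : ∀ l, α' l ⁻¹' ({1} : Set ℝ) = {ω | α' l ω = 1} := by
    intro l; ext ω; simp
  have hpre'' : ∀ l, α'' l ⁻¹' ({1} : Set ℝ) = {ω | α'' l ω = 1} := by
    intro l; ext ω; simp
  -- E[A] = ∏ p l via independence
  have hAset : {ω | (∏ l, α l ω) = 1} = ⋂ l, α l ⁻¹' ({1} : Set ℝ) := by
    ext ω
    simp only [Set.mem_setOf_eq, Set.mem_iInter, Set.mem_preimage, Set.mem_singleton_iff]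
    constructor
    · intro hA1 l
      by_contra hne
      rw [Finset.prod_eq_zero (Finset.mem_univ l) ((h01 l ω).resolve_right hne)] at hA1
      exact one_ne_zero hA1.symm
    · intro h; exact Finset.prod_eq_one fun l _ => h l
  have hmuA : μ (⋂ l, α l ⁻¹' ({1} : Set ℝ)) = ∏ l, ENNReal.ofReal (p l) := by
    have H := hindep.measure_inter_preimage_eq_mul
      (Finset.univ.image (Sum.inl : Fin L → Fin L ⊕ (Fin L ⊕ Fin L)))
      (sets := fun _ => ({1} : Set ℝ)) (fun i _ => measurableSet_singleton 1)
    have hL1 : (⋂ i ∈ Finset.univ.image (Sum.inl : Fin L → Fin L ⊕ (Fin L ⊕ Fin L)),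
        Sum.elim α (Sum.elim α' α'') i ⁻¹' ({1} : Set ℝ)) = ⋂ l, α l ⁻¹' ({1} : Set ℝ) := by
      ext ω
      simp [Set.mem_iInter, Finset.mem_image]
    have hR : (∏ i ∈ Finset.univ.image (Sum.inl : Fin L → Fin L ⊕ (Fin L ⊕ Fin L)),
        μ (Sum.elim α (Sum.elim α' α'') i ⁻¹' ({1} : Set ℝ))) =
        ∏ l, μ (α l ⁻¹' ({1} : Set ℝ)) :=
      Finset.prod_image fun _ _ _ _ h => Sum.inl.inj h
    rw [hL1, hR] at H
    rw [H]
    exact Finset.prod_congr rfl fun l _ => by rw [hpre l, hber l]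
  have hintA : ∫ ω, (∏ l, α l ω) ∂μ = ∏ l, p l := by
    rw [int01_aux μ hAmeas hA01, hAset, hmuA, ENNReal.toReal_prod]
    exact Finset.prod_congr rfl fun l _ => ENNReal.toReal_ofReal (hp l).1
  have hintA_le : ∫ ω, (∏ l, α l ω) ∂μ ≤ p₀ ^ L := by
    rw [hintA]
    calc ∏ l, p l ≤ ∏ _l : Fin L, p₀ :=
          Finset.prod_le_prod (fun l _ => (hp l).1) (fun l _ => hple l)
      _ = p₀ ^ L := by rw [Finset.prod_const, Finset.card_univ, Fintype.card_fin]
  have hintA_nonneg : 0 ≤ ∫ ω, (∏ l, α l ω) ∂μ :=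
    integral_nonneg fun ω => by rcases hA01 ω with h|h <;> simp [h]
  -- a generic final computation
  have hfinal : ∀ (g : Ω → ℝ) (k : ℕ), Measurable g → (∀ ω, 0 ≤ g ω) →
      (∀ ω, g ω ≤ Real.sqrt S) → (∫ ω, g ω ^ 2 ∂μ ≤ p₀ ^ k * S) →
      ∫ ω, (∏ l, α l ω) * g ω ∂μ ≤ p₀ ^ (((L : ℝ) + k) / 2) * Real.sqrt S := by
    intro g k hgm hg0 hgC hg2
    have hg2nn : 0 ≤ ∫ ω, g ω ^ 2 ∂μ := integral_nonneg fun ω => sq_nonneg _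
    calc ∫ ω, (∏ l, α l ω) * g ω ∂μ
        ≤ ((∫ ω, (∏ l, α l ω) ∂μ) * ∫ ω, g ω ^ 2 ∂μ) ^ ((1:ℝ)/2) :=
          cs_aux μ hAmeas hgm hA01 hg0 (Real.sqrt S) hgC
      _ ≤ (p₀ ^ L * (p₀ ^ k * S)) ^ ((1:ℝ)/2) := by
          apply Real.rpow_le_rpow (mul_nonneg hintA_nonneg hg2nn)
          · exact mul_le_mul hintA_le hg2 hg2nn (pow_nonneg hp00 L)
          · norm_num
      _ = p₀ ^ (((L : ℝ) + k) / 2) * Real.sqrt S := by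
          rw [show p₀ ^ L * (p₀ ^ k * S) = p₀ ^ (L + k) * S by rw [pow_add]; ring,
            Real.mul_rpow (pow_nonneg hp00 _) hS, rpow_half_pow_aux p₀ hp00 (L + k),
            ← Real.sqrt_eq_rpow]
          push_cast
          ring_nf
  constructor
  · -- part (i)
    have hsum_meas : Measurable fun ω => ∑ l, (x l * α' l ω) ^ 2 :=
      Finset.measurable_sum _ fun l _ => ((measurable_const.mul (hmeas' l)).pow_const 2)
    have hgm : Measurable fun ω => Real.sqrt (∑ l, (x l * α' l ω) ^ 2) :=
      Real.continuous_sqrt.measurable.comp hsum_meas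
    have hgC : ∀ ω, Real.sqrt (∑ l, (x l * α' l ω) ^ 2) ≤ Real.sqrt S := by
      intro ω
      apply Real.sqrt_le_sqrt
      apply Finset.sum_le_sum
      intro l _
      rcases h01' l ω with h|h <;> simp [h, sq_nonneg]
    have hsq : ∀ ω, (Real.sqrt (∑ l, (x l * α' l ω) ^ 2)) ^ 2
        = ∑ l, (x l) ^ 2 * α' l ω := by
      intro ω
      rw [Real.sq_sqrt (Finset.sum_nonneg fun l _ => sq_nonneg _)]
      refine Finset.sum_congr rfl fun l _ => ?_
      rcases h01' l ω with h|h <;> simp [h] <;> ring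
    have hint' : ∀ l, Integrable (α' l) μ := fun l => integrable01_aux μ (hmeas' l) (h01' l)
    have hg2 : ∫ ω, (Real.sqrt (∑ l, (x l * α' l ω) ^ 2)) ^ 2 ∂μ ≤ p₀ ^ 1 * S := by
      have : ∫ ω, (Real.sqrt (∑ l, (x l * α' l ω) ^ 2)) ^ 2 ∂μ
          = ∑ l, (x l) ^ 2 * p l := by
        simp only [hsq]
        rw [integral_finset_sum _ fun l _ => (hint' l).const_mul ((x l) ^ 2)]
        refine Finset.sum_congr rfl fun l _ => ?_
        rw [integral_const_mul, int01_aux μ (hmeas' l) (h01' l), hber' l,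
          ENNReal.toReal_ofReal (hp l).1]
      rw [this, pow_one, hS_def, Finset.mul_sum]
      refine Finset.sum_le_sum fun l _ => ?_
      rw [mul_comm p₀ _]
      exact mul_le_mul_of_nonneg_left (hple l) (sq_nonneg _)
    have := hfinal _ 1 hgm (fun ω => Real.sqrt_nonneg _) hgC hg2
    simpa using this
  · -- part (ii)
    have hsum_meas : Measurable fun ω => ∑ l, (x l * α' l ω * α'' l ω) ^ 2 :=
      Finset.measurable_sum _ fun l _ =>
        (((measurable_const.mul (hmeas' l)).mul (hmeas'' l)).pow_const 2)
    have hgm : Measurable fun ω => Real.sqrt (∑ l, (x l * α' l ω * α'' l ω) ^ 2) :=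
      Real.continuous_sqrt.measurable.comp hsum_meas
    have hgC : ∀ ω, Real.sqrt (∑ l, (x l * α' l ω * α'' l ω) ^ 2) ≤ Real.sqrt S := by
      intro ω
      apply Real.sqrt_le_sqrt
      apply Finset.sum_le_sum
      intro l _
      rcases h01' l ω with h|h <;> rcases h01'' l ω with h'|h' <;> simp [h, h', sq_nonneg]
    have hsq : ∀ ω, (Real.sqrt (∑ l, (x l * α' l ω * α'' l ω) ^ 2)) ^ 2
        = ∑ l, (x l) ^ 2 * (α' l ω * α'' l ω) := by
      intro ω
      rw [Real.sq_sqrt (Finset.sum_nonneg fun l _ => sq_nonneg _)]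
      refine Finset.sum_congr rfl fun l _ => ?_
      rcases h01' l ω with h|h <;> rcases h01'' l ω with h'|h' <;> simp [h, h'] <;> ring
    have hprod01 : ∀ l ω, α' l ω * α'' l ω = 0 ∨ α' l ω * α'' l ω = 1 := by
      intro l ω
      rcases h01' l ω with h|h <;> rcases h01'' l ω with h'|h' <;> simp [h, h']
    have hprodmeas : ∀ l, Measurable fun ω => α' l ω * α'' l ω :=
      fun l => (hmeas' l).mul (hmeas'' l)
    have hint2 : ∀ l, ∫ ω, α' l ω * α'' l ω ∂μ = p l ^ 2 := by
      intro l
      rw [int01_aux μ (hprodmeas l) (hprod01 l)]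
      have hset : {ω | α' l ω * α'' l ω = 1}
          = α' l ⁻¹' ({1} : Set ℝ) ∩ α'' l ⁻¹' ({1} : Set ℝ) := by
        ext ω
        simp only [Set.mem_setOf_eq, Set.mem_inter_iff, Set.mem_preimage,
          Set.mem_singleton_iff]
        rcases h01' l ω with h|h <;> rcases h01'' l ω with h'|h' <;> simp [h, h']
      have hind : IndepFun (α' l) (α'' l) μ := by
        have := hindep.indepFun
          (show (Sum.inr (Sum.inl l) : Fin L ⊕ (Fin L ⊕ Fin L)) ≠ Sum.inr (Sum.inr l) by simp)
        simpa using this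
      rw [hset, hind.measure_inter_preimage_eq_mul _ _ (measurableSet_singleton 1)
        (measurableSet_singleton 1), hpre' l, hpre'' l, hber' l, hber'' l,
        ENNReal.toReal_mul, ENNReal.toReal_ofReal (hp l).1]
      ring
    have hintprod : ∀ l, Integrable (fun ω => α' l ω * α'' l ω) μ :=
      fun l => integrable01_aux μ (hprodmeas l) (hprod01 l)
    have hg2 : ∫ ω, (Real.sqrt (∑ l, (x l * α' l ω * α'' l ω) ^ 2)) ^ 2 ∂μ ≤ p₀ ^ 2 * S := by
      have : ∫ ω, (Real.sqrt (∑ l, (x l * α' l ω * α'' l ω) ^ 2)) ^ 2 ∂μ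
          = ∑ l, (x l) ^ 2 * p l ^ 2 := by
        simp only [hsq]
        rw [integral_finset_sum _ fun l _ => (hintprod l).const_mul ((x l) ^ 2)]
        refine Finset.sum_congr rfl fun l _ => ?_
        rw [integral_const_mul, hint2 l]
      rw [this, hS_def, Finset.mul_sum]
      refine Finset.sum_le_sum fun l _ => ?_
      rw [mul_comm (p₀ ^ 2) _]
      exact mul_le_mul_of_nonneg_left (pow_le_pow_left₀ (hp l).1 (hple l) 2) (sq_nonneg _)
    have := hfinal _ 2 hgm (fun ω => Real.sqrt_nonneg _) hgC hg2
    simpa using this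
end

section
/- Let n, d ≥ 1 and C_w, C_X ≥ 0, and let x₁,…,x_n ∈ ℝ^d with ‖x_i‖₂ ≤ C_X for every i. On a probability space let ε₁,…,ε_n be i.i.d. Rademacher variables (uniform on {−1,+1}) and let α₁,…,α_n : Ω → {0,1}^d be random mask vectors, independent of the ε's, whose n·d coordinates are mutually independent with coordinate j of α_i Bernoulli(p_{ij})-distributed; set p₀ = max_{i,j} p_{ij} ∈ [0,1]. Then E[sup_{w ∈ ℝ^d, ‖w‖₂ ≤ C_w} (1/n)·Σ_{i=1}^{n} ε_i·⟨w, x_i ⊙ α_i⟩] ≤ C_w·C_X·√p₀/√n, where ⊙ is the coordinatewise product and ⟨·,·⟩ the Euclidean inner product. -/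
open MeasureTheory ProbabilityTheory

section AuxLemmas
variable {Ω : Type*} [MeasurableSpace Ω] {μ : Measure Ω} [IsProbabilityMeasure μ]

lemma aux_integrable_of_bdd {f : Ω → ℝ} (hm : Measurable f) {C : ℝ}
    (h : ∀ ω, |f ω| ≤ C) : Integrable f μ :=
  ⟨hm.aestronglyMeasurable, HasFiniteIntegral.of_bounded (C := C)
    (Filter.Eventually.of_forall (by simpa [Real.norm_eq_abs] using h))⟩

lemma aux_sqrt_integral_le {X : Ω → ℝ} (hX : Integrable X μ) (h0 : ∀ ω, 0 ≤ X ω) :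
    ∫ ω, Real.sqrt (X ω) ∂μ ≤ Real.sqrt (∫ ω, X ω ∂μ) := by
  set m := ∫ ω, X ω ∂μ with hm
  have hm0 : 0 ≤ m := integral_nonneg h0
  rcases eq_or_lt_of_le hm0 with hm0' | hm0'
  · have hz : X =ᵐ[μ] 0 := by
      rw [← integral_eq_zero_iff_of_nonneg h0 hX]
      exact hm0'.symm
    have : (fun ω => Real.sqrt (X ω)) =ᵐ[μ] 0 :=
      hz.mono fun ω hω => by simp [hω]
    rw [integral_congr_ae this]
    simp [Real.sqrt_nonneg]
  · have hsm : 0 < Real.sqrt m := Real.sqrt_pos.2 hm0'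
    have key : ∀ ω, Real.sqrt (X ω) ≤ (X ω + m) / (2 * Real.sqrt m) := by
      intro ω
      rw [le_div_iff₀ (by positivity)]
      nlinarith [sq_nonneg (Real.sqrt (X ω) - Real.sqrt m), Real.sq_sqrt (h0 ω),
        Real.sq_sqrt hm0, Real.sqrt_nonneg (X ω), Real.sqrt_nonneg m]
    have hint : Integrable (fun ω => (X ω + m) / (2 * Real.sqrt m)) μ :=
      (hX.add (integrable_const m)).div_const _
    calc ∫ ω, Real.sqrt (X ω) ∂μ ≤ ∫ ω, (X ω + m) / (2 * Real.sqrt m) ∂μ :=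
          integral_mono_of_nonneg (Filter.Eventually.of_forall fun ω => Real.sqrt_nonneg _)
            hint (Filter.Eventually.of_forall key)
      _ = (m + m) / (2 * Real.sqrt m) := by
          rw [integral_div, integral_add hX (integrable_const m), integral_const]
          simp
          rw [← hm]
      _ = Real.sqrt m := by
          rw [show m + m = 2 * m by ring, mul_div_mul_left _ _ (two_ne_zero)]
          exact Real.div_sqrt

end AuxLemmas

/-- The single-masked-layer instance of Theorem 10 of the paper: with i.i.d.
Rademacher signs `ε_i` and independent Bernoulli masks `α_i` (coordinatewise
Bernoulli(p_{ij}), all coordinates and signs mutually independent), inputs of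
Euclidean norm at most `C_X`, and weights ranging over the Euclidean ball of
radius `C_w`,
`E[sup_{‖w‖₂ ≤ C_w} (1/n) ∑_i ε_i ⟨w, x_i ⊙ α_i⟩] ≤ C_w C_X √p₀ / √n`,
where `p₀ = max_{i,j} p_{ij}`. -/
theorem masked_layer_rademacher_bound {Ω : Type*} [MeasurableSpace Ω]
    (μ : Measure Ω) [IsProbabilityMeasure μ]
    (n d : ℕ) (hn : 1 ≤ n) (hd : 1 ≤ d)
    (Cw CX : ℝ) (hCw : 0 ≤ Cw) (hCX : 0 ≤ CX)
    (x : Fin n → Fin d → ℝ)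
    (hx : ∀ i, Real.sqrt (∑ j, (x i j) ^ 2) ≤ CX)
    (ε : Fin n → Ω → ℝ)
    (hεmeas : ∀ i, Measurable (ε i))
    (hεval : ∀ i ω, ε i ω = 1 ∨ ε i ω = -1)
    (hεdist : ∀ i, μ {ω | ε i ω = 1} = 1 / 2)
    (α : Fin n → Fin d → Ω → ℝ)
    (hαmeas : ∀ i j, Measurable (α i j))
    (hαval : ∀ i j ω, α i j ω = 0 ∨ α i j ω = 1)
    (p : Fin n → Fin d → ℝ) (hp : ∀ i j, p i j ∈ Set.Icc (0:ℝ) 1)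
    (hαdist : ∀ i j, μ {ω | α i j ω = 1} = ENNReal.ofReal (p i j))
    (p₀ : ℝ) (hp₀ : IsGreatest {r : ℝ | ∃ i j, r = p i j} p₀)
    (hindep : iIndepFun
      (Sum.elim ε (fun q : Fin n × Fin d => α q.1 q.2)) μ) :
    (∫ ω, (⨆ w : {w : Fin d → ℝ // Real.sqrt (∑ j, (w j) ^ 2) ≤ Cw},
        (n : ℝ)⁻¹ * ∑ i, ε i ω * ∑ j, w.1 j * (x i j * α i j ω)) ∂μ)
      ≤ Cw * CX * Real.sqrt p₀ / Real.sqrt n := by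
  classical
  -- basic facts
  have hnpos : (0:ℝ) < n := by exact_mod_cast hn
  obtain ⟨i₀, j₀, hij₀⟩ := hp₀.1
  have hp₀nn : 0 ≤ p₀ := hij₀ ▸ (hp i₀ j₀).1
  have hp₀le : ∀ i j, p i j ≤ p₀ := fun i j => hp₀.2 ⟨i, j, rfl⟩
  have habsε : ∀ i ω, |ε i ω| = 1 := by
    intro i ω; rcases hεval i ω with h | h <;> simp [h]
  have habsα : ∀ i j ω, |α i j ω| ≤ 1 := by
    intro i j ω; rcases hαval i j ω with h | h <;> simp [h]
  -- the summand functions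
  set T : Fin n → Fin d → Ω → ℝ := fun i j ω => ε i ω * (x i j * α i j ω) with hT
  set v : Ω → Fin d → ℝ := fun ω j => (n:ℝ)⁻¹ * ∑ i, T i j ω with hv
  set X : Ω → ℝ := fun ω => ∑ j, (v ω j) ^ 2 with hX
  have hTmeas : ∀ i j, Measurable (T i j) :=
    fun i j => (hεmeas i).mul (measurable_const.mul (hαmeas i j))
  have hTbd : ∀ i j ω, |T i j ω| ≤ |x i j| := by
    intro i j ω
    rw [hT]
    simp only
    rw [abs_mul, habsε, one_mul, abs_mul]
    calc |x i j| * |α i j ω| ≤ |x i j| * 1 :=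
          mul_le_mul_of_nonneg_left (habsα i j ω) (abs_nonneg _)
      _ = |x i j| := mul_one _
  have hTint : ∀ i j, Integrable (T i j) μ :=
    fun i j => aux_integrable_of_bdd (hTmeas i j) (hTbd i j)
  have hvmeas : ∀ j, Measurable (fun ω => v ω j) :=
    fun j => (Finset.measurable_sum _ fun i _ => hTmeas i j).const_mul _
  have hvbd : ∀ ω j, |v ω j| ≤ ∑ i, |x i j| := by
    intro ω j
    rw [hv]
    simp only
    rw [abs_mul]
    calc |(n:ℝ)⁻¹| * |∑ i, T i j ω| ≤ 1 * ∑ i, |x i j| := by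
          apply mul_le_mul
          · rw [abs_of_nonneg (by positivity)]
            exact inv_le_one_of_one_le₀ (by exact_mod_cast hn)
          · exact (Finset.abs_sum_le_sum_abs _ _).trans
              (Finset.sum_le_sum fun i _ => hTbd i j ω)
          · exact abs_nonneg _
          · norm_num
      _ = ∑ i, |x i j| := one_mul _
  have hXnn : ∀ ω, 0 ≤ X ω := fun ω => Finset.sum_nonneg fun j _ => sq_nonneg _
  have hXbd : ∀ ω, |X ω| ≤ ∑ j, (∑ i, |x i j|) ^ 2 := by
    intro ω
    rw [abs_of_nonneg (hXnn ω)]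
    refine Finset.sum_le_sum fun j _ => ?_
    rw [← sq_abs]
    exact pow_le_pow_left₀ (abs_nonneg _) (hvbd ω j) 2
  have hXmeas : Measurable X :=
    Finset.measurable_sum _ fun j _ => (hvmeas j).pow_const 2
  have hXint : Integrable X μ := aux_integrable_of_bdd hXmeas hXbd
  -- Step A : pointwise bound on the supremum
  have hne : Nonempty {w : Fin d → ℝ // Real.sqrt (∑ j, (w j) ^ 2) ≤ Cw} :=
    ⟨⟨fun _ => 0, by simpa using hCw⟩⟩
  have hswap : ∀ (w : Fin d → ℝ) ω,
      (n : ℝ)⁻¹ * ∑ i, ε i ω * ∑ j, w j * (x i j * α i j ω) = ∑ j, w j * v ω j := by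
    intro w ω
    rw [hv]
    simp only [hT]
    rw [Finset.mul_sum]
    simp_rw [Finset.mul_sum]
    rw [Finset.sum_comm]
    refine Finset.sum_congr rfl fun j _ => ?_
    refine Finset.sum_congr rfl fun i _ => ?_
    ring
  have hsupbd : ∀ ω (w : {w : Fin d → ℝ // Real.sqrt (∑ j, (w j) ^ 2) ≤ Cw}),
      (n : ℝ)⁻¹ * ∑ i, ε i ω * ∑ j, w.1 j * (x i j * α i j ω)
        ≤ Cw * Real.sqrt (X ω) := by
    intro ω w
    rw [hswap w.1 ω]
    calc ∑ j, w.1 j * v ω j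
        ≤ Real.sqrt (∑ j, (w.1 j) ^ 2) * Real.sqrt (∑ j, (v ω j) ^ 2) :=
          Real.sum_mul_le_sqrt_mul_sqrt _ _ _
      _ ≤ Cw * Real.sqrt (X ω) :=
          mul_le_mul_of_nonneg_right w.2 (Real.sqrt_nonneg _)
  have hsup_le : ∀ ω,
      (⨆ w : {w : Fin d → ℝ // Real.sqrt (∑ j, (w j) ^ 2) ≤ Cw},
        (n : ℝ)⁻¹ * ∑ i, ε i ω * ∑ j, w.1 j * (x i j * α i j ω))
        ≤ Cw * Real.sqrt (X ω) := fun ω => ciSup_le (hsupbd ω)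
  have hsup_nn : ∀ ω, 0 ≤
      (⨆ w : {w : Fin d → ℝ // Real.sqrt (∑ j, (w j) ^ 2) ≤ Cw},
        (n : ℝ)⁻¹ * ∑ i, ε i ω * ∑ j, w.1 j * (x i j * α i j ω)) := by
    intro ω
    have hbdd : BddAbove (Set.range fun w : {w : Fin d → ℝ // Real.sqrt (∑ j, (w j) ^ 2) ≤ Cw} =>
        (n : ℝ)⁻¹ * ∑ i, ε i ω * ∑ j, w.1 j * (x i j * α i j ω)) :=
      ⟨Cw * Real.sqrt (X ω), by rintro r ⟨w, rfl⟩; exact hsupbd ω w⟩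
    have h0 : (0:ℝ) =
        (n : ℝ)⁻¹ * ∑ i, ε i ω * ∑ j,
          ((⟨fun _ => 0, by simpa using hCw⟩ :
            {w : Fin d → ℝ // Real.sqrt (∑ j, (w j) ^ 2) ≤ Cw}).1 j) * (x i j * α i j ω) := by
      simp
    rw [h0]
    exact le_ciSup hbdd _
  -- Step B : integral of the sup is at most Cw * ∫ √X
  have hgint : Integrable (fun ω => Cw * Real.sqrt (X ω)) μ := by
    refine aux_integrable_of_bdd (measurable_const.mul (hXmeas.sqrt)) (C := Cw * Real.sqrt (∑ j, (∑ i, |x i j|) ^ 2)) ?_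
    intro ω
    rw [abs_of_nonneg (by positivity)]
    exact mul_le_mul_of_nonneg_left
      (Real.sqrt_le_sqrt ((abs_of_nonneg (hXnn ω)) ▸ hXbd ω)) hCw
  have step1 : (∫ ω, (⨆ w : {w : Fin d → ℝ // Real.sqrt (∑ j, (w j) ^ 2) ≤ Cw},
        (n : ℝ)⁻¹ * ∑ i, ε i ω * ∑ j, w.1 j * (x i j * α i j ω)) ∂μ)
      ≤ ∫ ω, Cw * Real.sqrt (X ω) ∂μ :=
    integral_mono_of_nonneg (Filter.Eventually.of_forall hsup_nn) hgint
      (Filter.Eventually.of_forall hsup_le)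
  -- Step C : elementary expectations
  have hEε : ∀ i, ∫ ω, ε i ω ∂μ = 0 := by
    intro i
    have hA : MeasurableSet {ω | ε i ω = 1} := hεmeas i (measurableSet_singleton 1)
    have hrw : ∀ ω, ε i ω = 2 * Set.indicator {ω' | ε i ω' = 1} 1 ω - 1 := by
      intro ω
      rcases hεval i ω with h | h
      · have hm : ω ∈ {ω' | ε i ω' = 1} := h
        rw [h, Set.indicator_of_mem hm]
        norm_num
      · have hm : ω ∉ {ω' | ε i ω' = 1} := by
          simp only [Set.mem_setOf_eq, h]
          norm_num
        rw [h, Set.indicator_of_notMem hm]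
        norm_num
    have htor : ((1:ENNReal)/2).toReal = 1/2 := by
      rw [ENNReal.toReal_div]
      simp
    calc ∫ ω, ε i ω ∂μ
        = ∫ ω, (2 * Set.indicator {ω' | ε i ω' = 1} 1 ω - 1) ∂μ :=
          integral_congr_ae (Filter.Eventually.of_forall hrw)
      _ = 0 := by
          have h1 : Integrable (fun ω => 2 * Set.indicator {ω' | ε i ω' = 1} (1 : Ω → ℝ) ω) μ :=
            (((integrable_const (1:ℝ)).indicator hA)).const_mul 2
          rw [integral_sub h1 (integrable_const 1)]
          rw [integral_const_mul, integral_indicator_one hA, measureReal_def, hεdist i, integral_const, htor]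
          simp
  have hEα : ∀ i j, ∫ ω, α i j ω ∂μ = p i j := by
    intro i j
    have hB : MeasurableSet {ω | α i j ω = 1} := hαmeas i j (measurableSet_singleton 1)
    have hrw : α i j = Set.indicator {ω | α i j ω = 1} 1 := by
      funext ω
      rcases hαval i j ω with h | h
      · have : ω ∉ {ω | α i j ω = 1} := by simp [h]
        simp [Set.indicator_of_notMem this, h]
      · simp [Set.indicator, h]
    rw [hrw, integral_indicator_one hB, measureReal_def, hαdist i j, ENNReal.toReal_ofReal (hp i j).1]
  have hfmeas : ∀ s : Fin n ⊕ (Fin n × Fin d),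
      Measurable (Sum.elim ε (fun q : Fin n × Fin d => α q.1 q.2) s) := by
    rintro (i | ⟨i, j⟩)
    · exact hεmeas i
    · exact hαmeas i j
  have hεαmeas : ∀ i j, Measurable (fun ω => ε i ω * α i j ω) :=
    fun i j => (hεmeas i).mul (hαmeas i j)
  have hεαbd : ∀ i j ω, |ε i ω * α i j ω| ≤ 1 := by
    intro i j ω
    rw [abs_mul, habsε, one_mul]
    exact habsα i j ω
  have hεαint : ∀ i j, Integrable (fun ω => ε i ω * α i j ω) μ :=
    fun i j => aux_integrable_of_bdd (hεαmeas i j) (hεαbd i j)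
  have hEεα : ∀ i j, ∫ ω, ε i ω * α i j ω ∂μ = 0 := by
    intro i j
    have hind : IndepFun (ε i) (α i j) μ :=
      hindep.indepFun (show (Sum.inl i : Fin n ⊕ (Fin n × Fin d)) ≠ Sum.inr (i, j) by simp)
    have := hind.integral_mul_eq_mul_integral
      (aux_integrable_of_bdd (hεmeas i) (C := 1) (fun ω => (habsε i ω).le)).1
      (aux_integrable_of_bdd (hαmeas i j) (C := 1) (habsα i j)).1
    have h2 : ∫ ω, ε i ω * α i j ω ∂μ = (∫ ω, ε i ω ∂μ) * ∫ ω, α i j ω ∂μ := this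
    rw [h2, hEε i, zero_mul]
  -- Step D : cross terms vanish
  have hcross : ∀ (j : Fin d) (i k : Fin n), i ≠ k →
      ∫ ω, T i j ω * T k j ω ∂μ = 0 := by
    intro j i k hik
    have hpair := hindep.indepFun_prodMk_prodMk hfmeas
      (Sum.inl i) (Sum.inr (i, j)) (Sum.inl k) (Sum.inr (k, j))
      (by simp [hik]) (by simp) (by simp) (by simp [hik])
    have hmul : Measurable (fun q : ℝ × ℝ => q.1 * q.2) :=
      measurable_fst.mul measurable_snd
    have h2 : IndepFun (fun ω => ε i ω * α i j ω) (fun ω => ε k ω * α k j ω) μ :=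
      hpair.comp hmul hmul
    have h3 : ∫ ω, (ε i ω * α i j ω) * (ε k ω * α k j ω) ∂μ
        = (∫ ω, ε i ω * α i j ω ∂μ) * ∫ ω, ε k ω * α k j ω ∂μ :=
      h2.integral_mul_eq_mul_integral (hεαint i j).1 (hεαint k j).1
    calc ∫ ω, T i j ω * T k j ω ∂μ
        = ∫ ω, (x i j * x k j) * ((ε i ω * α i j ω) * (ε k ω * α k j ω)) ∂μ := by
          refine integral_congr_ae (Filter.Eventually.of_forall fun ω => ?_)
          simp only [hT]; ring
      _ = (x i j * x k j) * ∫ ω, (ε i ω * α i j ω) * (ε k ω * α k j ω) ∂μ :=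
          integral_const_mul _ _
      _ = 0 := by rw [h3, hEεα i j, zero_mul, mul_zero]
  have hdiag : ∀ (j : Fin d) (i : Fin n),
      ∫ ω, T i j ω * T i j ω ∂μ = x i j ^ 2 * p i j := by
    intro j i
    have hrw : ∀ ω, T i j ω * T i j ω = x i j ^ 2 * α i j ω := by
      intro ω
      have hε2 : ε i ω * ε i ω = 1 := by rcases hεval i ω with h | h <;> rw [h] <;> norm_num
      have hα2 : α i j ω * α i j ω = α i j ω := by
        rcases hαval i j ω with h | h <;> rw [h] <;> norm_num
      calc T i j ω * T i j ω = x i j ^ 2 * ((ε i ω * ε i ω) * (α i j ω * α i j ω)) := by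
            simp only [hT]; ring
        _ = x i j ^ 2 * α i j ω := by rw [hε2, hα2, one_mul]
    rw [integral_congr_ae (Filter.Eventually.of_forall hrw), integral_const_mul, hEα i j]
  -- Step E : compute ∫ X
  have hTTint : ∀ (j : Fin d) (i k : Fin n), Integrable (fun ω => T i j ω * T k j ω) μ := by
    intro j i k
    refine aux_integrable_of_bdd ((hTmeas i j).mul (hTmeas k j)) (C := |x i j| * |x k j|) ?_
    intro ω
    rw [abs_mul]
    exact mul_le_mul (hTbd i j ω) (hTbd k j ω) (abs_nonneg _) (abs_nonneg _)
  have hEX : ∫ ω, X ω ∂μ = ((n:ℝ)⁻¹)^2 * ∑ j, ∑ i, x i j ^ 2 * p i j := by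
    have hvsq : ∀ ω j, (v ω j) ^ 2 = ((n:ℝ)⁻¹)^2 * ∑ i, ∑ k, T i j ω * T k j ω := by
      intro ω j
      rw [hv]
      simp only
      rw [mul_pow]
      congr 1
      rw [pow_two]
      exact Finset.sum_mul_sum _ _ _ _
    rw [hX]
    simp only
    rw [integral_finset_sum _ (fun j _ => by
      refine aux_integrable_of_bdd ((hvmeas j).pow_const 2) (C := (∑ i, |x i j|)^2) ?_
      intro ω
      rw [abs_of_nonneg (sq_nonneg _), ← sq_abs]
      exact pow_le_pow_left₀ (abs_nonneg _) (hvbd ω j) 2)]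
    rw [Finset.mul_sum]
    refine Finset.sum_congr rfl fun j _ => ?_
    calc ∫ ω, (v ω j) ^ 2 ∂μ
        = ∫ ω, ((n:ℝ)⁻¹)^2 * ∑ i, ∑ k, T i j ω * T k j ω ∂μ :=
          integral_congr_ae (Filter.Eventually.of_forall fun ω => hvsq ω j)
      _ = ((n:ℝ)⁻¹)^2 * ∫ ω, ∑ i, ∑ k, T i j ω * T k j ω ∂μ := integral_const_mul _ _
      _ = ((n:ℝ)⁻¹)^2 * ∑ i, x i j ^ 2 * p i j := by
          rw [integral_finset_sum _ (fun i _ => integrable_finset_sum _ (fun k _ => hTTint j i k))]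
          congr 1
          refine Finset.sum_congr rfl fun i _ => ?_
          rw [integral_finset_sum _ (fun k _ => hTTint j i k)]
          rw [Finset.sum_eq_single i]
          · exact hdiag j i
          · intro k _ hki
            exact hcross j i k (Ne.symm hki)
          · intro h
            exact absurd (Finset.mem_univ i) h
  -- Step F : bound ∫ X
  have hEXle : ∫ ω, X ω ∂μ ≤ p₀ * CX ^ 2 / n := by
    rw [hEX]
    have h1 : ∑ j, ∑ i, x i j ^ 2 * p i j ≤ p₀ * ∑ i, ∑ j, x i j ^ 2 := by
      rw [Finset.sum_comm, Finset.mul_sum]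
      refine Finset.sum_le_sum fun i _ => ?_
      rw [Finset.mul_sum]
      refine Finset.sum_le_sum fun j _ => ?_
      calc x i j ^ 2 * p i j ≤ x i j ^ 2 * p₀ :=
            mul_le_mul_of_nonneg_left (hp₀le i j) (sq_nonneg _)
        _ = p₀ * x i j ^ 2 := mul_comm _ _
    have h2 : ∑ i, ∑ j, x i j ^ 2 ≤ n * CX ^ 2 := by
      calc ∑ i, ∑ j, x i j ^ 2 ≤ ∑ _i : Fin n, CX ^ 2 := by
            refine Finset.sum_le_sum fun i _ => ?_
            have hs : 0 ≤ ∑ j, x i j ^ 2 := Finset.sum_nonneg fun j _ => sq_nonneg _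
            calc ∑ j, x i j ^ 2 = (Real.sqrt (∑ j, x i j ^ 2)) ^ 2 := (Real.sq_sqrt hs).symm
              _ ≤ CX ^ 2 := pow_le_pow_left₀ (Real.sqrt_nonneg _) (hx i) 2
        _ = n * CX ^ 2 := by rw [Finset.sum_const, Finset.card_univ, Fintype.card_fin,
            nsmul_eq_mul]
    calc ((n:ℝ)⁻¹)^2 * ∑ j, ∑ i, x i j ^ 2 * p i j
        ≤ ((n:ℝ)⁻¹)^2 * (p₀ * (n * CX ^ 2)) := by
          refine mul_le_mul_of_nonneg_left ?_ (by positivity)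
          exact h1.trans (mul_le_mul_of_nonneg_left h2 hp₀nn)
      _ = p₀ * CX ^ 2 / n := by field_simp
  -- Step G : conclude
  have step2 : ∫ ω, Cw * Real.sqrt (X ω) ∂μ ≤ Cw * Real.sqrt (p₀ * CX ^ 2 / n) := by
    rw [integral_const_mul]
    refine mul_le_mul_of_nonneg_left ?_ hCw
    exact (aux_sqrt_integral_le hXint hXnn).trans (Real.sqrt_le_sqrt hEXle)
  refine step1.trans (step2.trans (le_of_eq ?_))
  rw [show p₀ * CX ^ 2 / n = p₀ * CX ^ 2 * ((n:ℝ))⁻¹ by ring]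
  rw [Real.sqrt_mul (by positivity), Real.sqrt_mul hp₀nn, Real.sqrt_sq hCX, Real.sqrt_inv]
  field_simp
end
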